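/- arXiv:1707.08650 — 12 statements merged into one kernel-verified Lean document; each statement's English description precedes it below -/
import Mathlib

section
/- Let V be a finite-dimensional real normed vector space and K ⊆ V a nonempty compact convex set. Then 𝔖(K) is a base of the cone C*(K): for every ψ ∈ C*(K) with ψ ≠ 0 there exist a unique real λ > 0 and a unique φ ∈ 𝔖(K) such that ψ = λ • φ. -/
open scoped BigOperators

/-- Evaluation of affine functions at a point, as a linear functional on `A(V) = V →ᵃ[ℝ] ℝ`. -/
def evalFun {V : Type*} [NormedAddCommGroup V] [NormedSpace ℝ V] (x : V) :
    (V →ᵃ[ℝ] ℝ) →ₗ[ℝ] ℝ where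
  toFun f := f x
  map_add' f g := rfl
  map_smul' c f := rfl

/-- The positive dual cone `C*(K)`: linear functionals on `A(V)` nonnegative on every
affine function that is nonnegative on `K`. -/
def posDual {V : Type*} [NormedAddCommGroup V] [NormedSpace ℝ V] (K : Set V) :
    Set ((V →ᵃ[ℝ] ℝ) →ₗ[ℝ] ℝ) :=
  {ψ | ∀ f : V →ᵃ[ℝ] ℝ, (∀ x ∈ K, 0 ≤ f x) → 0 ≤ ψ f}

/-- The state space `𝔖(K)` of the effect algebra of `K`: normalized elements of `C*(K)`. -/
def states {V : Type*} [NormedAddCommGroup V] [NormedSpace ℝ V] (K : Set V) :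
    Set ((V →ᵃ[ℝ] ℝ) →ₗ[ℝ] ℝ) :=
  {ψ ∈ posDual K | ψ (AffineMap.const ℝ V (1 : ℝ)) = 1}

lemma const_smul_one {V : Type*} [NormedAddCommGroup V] [NormedSpace ℝ V] (c : ℝ) :
    (AffineMap.const ℝ V c) = c • (AffineMap.const ℝ V (1 : ℝ)) := by
  ext x; simp

/-- `𝔖(K)` is a base of the cone `C*(K)`: every nonzero `ψ ∈ C*(K)` is a
positive multiple of a unique state, with unique positive coefficient. -/
theorem states_isBase {V : Type*} [NormedAddCommGroup V] [NormedSpace ℝ V]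
    [FiniteDimensional ℝ V] (K : Set V) (hne : K.Nonempty) (hcomp : IsCompact K)
    (hconv : Convex ℝ K) :
    ∀ ψ ∈ posDual K, ψ ≠ 0 →
      ∃! p : ℝ × ((V →ᵃ[ℝ] ℝ) →ₗ[ℝ] ℝ),
        0 < p.1 ∧ p.2 ∈ states K ∧ ψ = p.1 • p.2 := by
  intro ψ hψ hψ0
  have h1nonneg : (0:ℝ) ≤ ψ (AffineMap.const ℝ V (1 : ℝ)) := by
    apply hψ; intro x hx; simp
  have h1pos : 0 < ψ (AffineMap.const ℝ V (1 : ℝ)) := by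
    rcases lt_or_eq_of_le h1nonneg with h | h
    · exact h
    · exfalso; apply hψ0
      ext f
      have hcont : ContinuousOn f K := (AffineMap.continuous_of_finiteDimensional f).continuousOn
      obtain ⟨c, hc⟩ := hcomp.exists_bound_of_continuousOn hcont
      have h1 : 0 ≤ ψ (AffineMap.const ℝ V c - f) := by
        apply hψ; intro x hx
        have := hc x hx
        simp only [AffineMap.coe_sub, AffineMap.coe_const, Pi.sub_apply, Function.const_apply]
        linarith [abs_le.mp this |>.2]
      have h2 : 0 ≤ ψ (AffineMap.const ℝ V c + f) := by
        apply hψ; intro x hx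
        have := hc x hx
        simp only [AffineMap.coe_add, AffineMap.coe_const, Pi.add_apply, Function.const_apply]
        linarith [abs_le.mp this |>.1]
      have hconst : ψ (AffineMap.const ℝ V c) = 0 := by
        rw [const_smul_one, map_smul, ← h]; simp
      rw [map_sub, hconst] at h1
      rw [map_add, hconst] at h2
      simp only [LinearMap.zero_apply]
      linarith
  set lam := ψ (AffineMap.const ℝ V (1 : ℝ)) with hlam
  refine ⟨(lam, lam⁻¹ • ψ), ⟨h1pos, ⟨?_, ?_⟩, ?_⟩, ?_⟩
  · intro f hf
    simp only [LinearMap.smul_apply, smul_eq_mul]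
    exact mul_nonneg (inv_nonneg.mpr h1pos.le) (hψ f hf)
  · simp only [LinearMap.smul_apply, smul_eq_mul, ← hlam]
    field_simp
  · simp only [smul_smul, mul_inv_cancel₀ h1pos.ne', one_smul]
  · rintro ⟨μ, φ⟩ ⟨hμ, ⟨hφpos, hφ1⟩, hψeq⟩
    have hμlam : μ = lam := by
      have := congrArg (fun θ => θ (AffineMap.const ℝ V (1:ℝ))) hψeq
      simp only [LinearMap.smul_apply, smul_eq_mul, hφ1, mul_one] at this
      rw [hlam, this]
    have : φ = lam⁻¹ • ψ := by
      rw [hψeq, hμlam, smul_smul, inv_mul_cancel₀ h1pos.ne', one_smul]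
    exact Prod.ext hμlam this
end

section
/- Let V be a finite-dimensional real normed vector space and K ⊆ V a nonempty compact convex set whose affine span is all of V (affineSpan ℝ K = ⊤). Then the cone C*(K) is generating in the dual of A(V): for every linear functional ψ : A(V) → ℝ there exist φ₊, φ₋ ∈ C*(K) with ψ = φ₊ − φ₋. -/
open scoped BigOperators

section Aux

variable {V : Type*} [NormedAddCommGroup V] [NormedSpace ℝ V]

lemma posDual_add {K : Set V} {φ φ' : (V →ᵃ[ℝ] ℝ) →ₗ[ℝ] ℝ}
    (h : φ ∈ posDual K) (h' : φ' ∈ posDual K) : φ + φ' ∈ posDual K :=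
  fun f hf => add_nonneg (h f hf) (h' f hf)

lemma posDual_smul {K : Set V} {c : ℝ} (hc : 0 ≤ c) {φ : (V →ᵃ[ℝ] ℝ) →ₗ[ℝ] ℝ}
    (h : φ ∈ posDual K) : c • φ ∈ posDual K :=
  fun f hf => mul_nonneg hc (h f hf)

lemma posDual_zero (K : Set V) : (0 : (V →ᵃ[ℝ] ℝ) →ₗ[ℝ] ℝ) ∈ posDual K :=
  fun _ _ => le_refl 0

lemma evalFun_mem_posDual {K : Set V} {x : V} (hx : x ∈ K) : evalFun x ∈ posDual K :=
  fun f hf => hf x hx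

/-- The set of differences of elements of `posDual K`, as a submodule. -/
noncomputable def posDualDiff (K : Set V) : Submodule ℝ ((V →ᵃ[ℝ] ℝ) →ₗ[ℝ] ℝ) where
  carrier := {ψ | ∃ φp ∈ posDual K, ∃ φm ∈ posDual K, ψ = φp - φm}
  zero_mem' := ⟨0, posDual_zero K, 0, posDual_zero K, by simp⟩
  add_mem' := by
    rintro a b ⟨p, hp, m, hm, rfl⟩ ⟨p', hp', m', hm', rfl⟩
    exact ⟨p + p', posDual_add hp hp', m + m', posDual_add hm hm', by abel⟩
  smul_mem' := by
    rintro c a ⟨p, hp, m, hm, rfl⟩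
    rcases le_or_gt 0 c with hc | hc
    · exact ⟨c • p, posDual_smul hc hp, c • m, posDual_smul hc hm, by
        rw [smul_sub]⟩
    · refine ⟨(-c) • m, posDual_smul (by linarith) hm, (-c) • p,
        posDual_smul (by linarith) hp, ?_⟩
      rw [smul_sub]
      module

end Aux

/-- if the affine span of `K` is all of `V`, then `C*(K)` is generating in
the dual of `A(V)`: every linear functional is a difference of two elements of `C*(K)`. -/
theorem posDual_generating {V : Type*} [NormedAddCommGroup V] [NormedSpace ℝ V]
    [FiniteDimensional ℝ V] (K : Set V) (hne : K.Nonempty) (hcomp : IsCompact K)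
    (hconv : Convex ℝ K) (hspan : affineSpan ℝ K = ⊤) :
    ∀ ψ : (V →ᵃ[ℝ] ℝ) →ₗ[ℝ] ℝ,
      ∃ φp ∈ posDual K, ∃ φm ∈ posDual K, ψ = φp - φm := by
  intro ψ
  -- A(V) is finite-dimensional
  have hfd : FiniteDimensional ℝ (V →ᵃ[ℝ] ℝ) :=
    LinearEquiv.finiteDimensional (AffineMap.toConstProdLinearMap (k := ℝ) (V1 := V) (V2 := ℝ) ℝ).symm
  obtain ⟨x₀, hx₀⟩ := hne
  -- Any affine map vanishing on K is zero
  have hvanish : ∀ f : V →ᵃ[ℝ] ℝ, (∀ x ∈ K, f x = 0) → f = 0 := by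
    intro f hf
    have hlin : f.linear = 0 := by
      have hsub : K -ᵥ K ⊆ (LinearMap.ker f.linear : Set V) := by
        rintro v ⟨a, ha, b, hb, rfl⟩
        have h1 : f.linear (a -ᵥ b) = f a -ᵥ f b := f.linearMap_vsub a b
        have h2 : f.linear (a -ᵥ b) = 0 := by
          rw [h1, vsub_eq_sub, hf a ha, hf b hb, sub_zero]
        simpa [LinearMap.mem_ker] using h2
      have hvs : vectorSpan ℝ K = ⊤ := by
        rw [← direction_affineSpan, hspan]
        exact AffineSubspace.direction_top ℝ V V
      have : (⊤ : Submodule ℝ V) ≤ LinearMap.ker f.linear := by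
        rw [← hvs, vectorSpan_def]
        exact Submodule.span_le.mpr hsub
      ext v
      simpa using this (Submodule.mem_top : v ∈ ⊤)
    ext x
    have : f x = f.linear (x -ᵥ x₀) + f x₀ := by
      conv_lhs => rw [show x = (x -ᵥ x₀) +ᵥ x₀ by simp]
      rw [f.map_vadd]
      simp [vadd_eq_add, add_comm]
    simp [this, hlin, hf x₀ hx₀]
  -- Evaluations at points of K span the dual of A(V)
  have hspan' : Submodule.span ℝ (evalFun '' K : Set ((V →ᵃ[ℝ] ℝ) →ₗ[ℝ] ℝ)) = ⊤ := by
    apply Submodule.span_eq_top_of_ne_zero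
    intro f hf
    by_contra h
    push_neg at h
    apply hf
    apply hvanish
    intro x hx
    exact h (evalFun x) ⟨x, hx, rfl⟩
  -- posDualDiff K contains the span, hence everything
  have hle : Submodule.span ℝ (evalFun '' K) ≤ posDualDiff K := by
    rw [Submodule.span_le]
    rintro _ ⟨x, hx, rfl⟩
    exact ⟨evalFun x, evalFun_mem_posDual hx, 0, posDual_zero K, by simp⟩
  have : ψ ∈ posDualDiff K := hle (hspan' ▸ Submodule.mem_top)
  exact this
end

section
/- Let V and W be finite-dimensional real vector spaces, let v₁, …, vₙ be a basis of V, let C₁ = {Σᵢ tᵢ • vᵢ : tᵢ ≥ 0} be the simplicial cone generated by this basis, and let C₂ ⊆ W be a closed convex cone. Then every ψ ∈ C₁ ⊗max C₂ can be written as ψ = Σᵢ vᵢ ⊗ wᵢ with wᵢ ∈ C₂; in particular the maximal tensor cone C₁ ⊗max C₂ equals the minimal tensor cone C₁ ⊗min C₂ (this is the statement that the minimal and maximal tensor products of a simplex with any state space coincide). -/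
open scoped BigOperators TensorProduct

noncomputable section

/-- The product functional `f ⊗ g` on `V ⊗[ℝ] W`, given by the canonical pairing. -/
def tensorDual {V W : Type*} [AddCommGroup V] [Module ℝ V] [AddCommGroup W] [Module ℝ W]
    (f : Module.Dual ℝ V) (g : Module.Dual ℝ W) : Module.Dual ℝ (V ⊗[ℝ] W) :=
  (TensorProduct.lid ℝ ℝ).toLinearMap.comp (TensorProduct.map f g)

/-- The minimal tensor cone: finite sums of elementary tensors of cone elements. -/
def minTensor {V W : Type*} [AddCommGroup V] [Module ℝ V] [AddCommGroup W] [Module ℝ W]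
    (C : Set V) (D : Set W) : Set (V ⊗[ℝ] W) :=
  {ψ | ∃ (n : ℕ) (x : Fin n → V) (y : Fin n → W),
    (∀ i, x i ∈ C) ∧ (∀ i, y i ∈ D) ∧ ψ = ∑ i, x i ⊗ₜ[ℝ] y i}

/-- The maximal tensor cone: elements pairing nonnegatively with all products of
functionals nonnegative on the respective cones. -/
def maxTensor {V W : Type*} [AddCommGroup V] [Module ℝ V] [AddCommGroup W] [Module ℝ W]
    (C : Set V) (D : Set W) : Set (V ⊗[ℝ] W) :=
  {ψ | ∀ f : Module.Dual ℝ V, ∀ g : Module.Dual ℝ W,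
    (∀ x ∈ C, 0 ≤ f x) → (∀ y ∈ D, 0 ≤ g y) → 0 ≤ tensorDual f g ψ}

/-!
Expand `ψ ∈ V ⊗ W` in a basis `b` of `V` as `ψ = Σᵢ bᵢ ⊗ wᵢ`. Pairing `ψ` with `b.coord i ⊗ g`
gives `g wᵢ`, and the coordinate functionals are nonnegative on the simplicial cone of `b`.
So if `ψ` lies in the maximal tensor cone, every `wᵢ` is nonnegative against the dual cone
of `C₂`, hence lies in `C₂` by Hahn–Banach (a closed convex cone is its own bidual).
-/

theorem ProperCone.mem_of_forall_dual_nonneg {E : Type*} [TopologicalSpace E] [AddCommGroup E]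
    [IsTopologicalAddGroup E] [Module ℝ E] [ContinuousSMul ℝ E] [LocallyConvexSpace ℝ E]
    (C : ProperCone ℝ E) {w : E}
    (h : ∀ g : Module.Dual ℝ E, (∀ y ∈ C, 0 ≤ g y) → 0 ≤ g w) : w ∈ C := by
  by_contra hw
  obtain ⟨f, hfC, hfw⟩ := C.hyperplane_separation_point hw
  exact hfw.not_ge (h f hfC)

section TensorCones

open TensorProduct

variable {V W : Type*} [AddCommGroup V] [Module ℝ V] [AddCommGroup W] [Module ℝ W]

@[simp]
theorem tensorDual_tmul (f : Module.Dual ℝ V) (g : Module.Dual ℝ W) (x : V) (y : W) :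
    tensorDual f g (x ⊗ₜ y) = f x * g y := by
  simp [tensorDual]

theorem minTensor_subset_maxTensor (C : Set V) (D : Set W) : minTensor C D ⊆ maxTensor C D := by
  rintro _ ⟨m, x, y, hx, hy, rfl⟩ f g hf hg
  rw [map_sum]
  exact Finset.sum_nonneg fun i _ ↦ by
    rw [tensorDual_tmul]
    exact mul_nonneg (hf _ (hx i)) (hg _ (hy i))

variable {ι : Type*} (b : Module.Basis ι ℝ V)

theorem sum_tmul_equivFinsuppOfBasisLeft [Fintype ι] [DecidableEq ι] (ψ : V ⊗[ℝ] W) :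
    ∑ i, b i ⊗ₜ[ℝ] equivFinsuppOfBasisLeft b ψ i = ψ := by
  conv_rhs => rw [← (equivFinsuppOfBasisLeft b).symm_apply_apply ψ]
  rw [equivFinsuppOfBasisLeft_symm_apply, Finsupp.sum_fintype _ _ (by simp)]

theorem tensorDual_coord [DecidableEq ι] (i : ι) (g : Module.Dual ℝ W) (ψ : V ⊗[ℝ] W) :
    tensorDual (b.coord i) g ψ = g (equivFinsuppOfBasisLeft b ψ i) := by
  induction ψ using TensorProduct.induction_on <;> simp_all [mul_comm]

def simplicialCone [Fintype ι] : Set V :=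
  {v | ∃ t : ι → ℝ, (∀ i, 0 ≤ t i) ∧ v = ∑ i, t i • b i}

theorem basis_mem_simplicialCone [Fintype ι] [DecidableEq ι] (i : ι) : b i ∈ simplicialCone b :=
  ⟨Pi.single i 1, fun j ↦ by by_cases h : j = i <;> simp [h], by simp [Pi.single_apply]⟩

theorem coord_nonneg_of_mem_simplicialCone [Fintype ι] (i : ι) {v : V}
    (hv : v ∈ simplicialCone b) :
    0 ≤ b.coord i v := by
  obtain ⟨t, ht, rfl⟩ := hv
  rw [Module.Basis.coord_apply, b.repr_sum_self]
  exact ht i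

theorem exists_sum_tmul_of_mem_maxTensor_simplicialCone [Fintype ι] [TopologicalSpace W]
    [IsTopologicalAddGroup W] [ContinuousSMul ℝ W] [LocallyConvexSpace ℝ W]
    (C : ProperCone ℝ W) {ψ : V ⊗[ℝ] W} (hψ : ψ ∈ maxTensor (simplicialCone b) (C : Set W)) :
    ∃ w : ι → W, (∀ i, w i ∈ C) ∧ ψ = ∑ i, b i ⊗ₜ[ℝ] w i := by
  classical
  refine ⟨fun i ↦ equivFinsuppOfBasisLeft b ψ i, fun i ↦ ?_,
    (sum_tmul_equivFinsuppOfBasisLeft b ψ).symm⟩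
  refine C.mem_of_forall_dual_nonneg fun g hg ↦ ?_
  rw [← tensorDual_coord]
  exact hψ _ g (fun v hv ↦ coord_nonneg_of_mem_simplicialCone b i hv) hg

end TensorCones

theorem simplex_minTensor_eq_maxTensor_general {n : ℕ} {V W : Type*}
    [AddCommGroup V] [Module ℝ V]
    [NormedAddCommGroup W] [NormedSpace ℝ W]
    (b : Module.Basis (Fin n) ℝ V) (C₁ : Set V)
    (hC₁ : C₁ = {v | ∃ t : Fin n → ℝ, (∀ i, 0 ≤ t i) ∧ v = ∑ i, t i • b i})
    (C₂ : ProperCone ℝ W) :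
    (∀ ψ ∈ maxTensor C₁ (C₂ : Set W),
      ∃ w : Fin n → W, (∀ i, w i ∈ C₂) ∧ ψ = ∑ i, b i ⊗ₜ[ℝ] w i) ∧
    maxTensor C₁ (C₂ : Set W) = minTensor C₁ (C₂ : Set W) := by
  change C₁ = simplicialCone b at hC₁
  subst hC₁
  have hmax := fun ψ (hψ : ψ ∈ maxTensor _ _) ↦
    exists_sum_tmul_of_mem_maxTensor_simplicialCone b C₂ hψ
  refine ⟨hmax, subset_antisymm (fun ψ hψ ↦ ?_) (minTensor_subset_maxTensor _ _)⟩
  obtain ⟨w, hw, rfl⟩ := hmax ψ hψ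
  exact ⟨n, b, w, basis_mem_simplicialCone b, hw, rfl⟩

/-- for the simplicial cone `C₁` generated by a basis of `V` and any closed
convex (proper) cone `C₂` in `W`, every element of the maximal tensor cone is a sum
`Σᵢ vᵢ ⊗ wᵢ` with `wᵢ ∈ C₂`; in particular the maximal and minimal tensor cones coincide. -/
theorem simplex_minTensor_eq_maxTensor {n : ℕ} (hn : 1 ≤ n) {V W : Type*}
    [AddCommGroup V] [Module ℝ V] [FiniteDimensional ℝ V]
    [NormedAddCommGroup W] [NormedSpace ℝ W] [FiniteDimensional ℝ W]
    (b : Module.Basis (Fin n) ℝ V) (C₁ : Set V)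
    (hC₁ : C₁ = {v | ∃ t : Fin n → ℝ, (∀ i, 0 ≤ t i) ∧ v = ∑ i, t i • b i})
    (C₂ : ProperCone ℝ W) :
    (∀ ψ ∈ maxTensor C₁ (C₂ : Set W),
      ∃ w : Fin n → W, (∀ i, w i ∈ C₂) ∧ ψ = ∑ i, b i ⊗ₜ[ℝ] w i) ∧
    maxTensor C₁ (C₂ : Set W) = minTensor C₁ (C₂ : Set W) :=
  simplex_minTensor_eq_maxTensor_general b C₁ hC₁ C₂

end
end

section
/- Let V₁, V₂ be finite-dimensional real normed vector spaces and K₁ ⊆ V₁, K₂ ⊆ V₂ nonempty compact convex sets. Let Λ be the linear map sending a functional ψ on A(V₁ × V₂) to the pair (ψ₁, ψ₂), where ψ₁ f = ψ (f ∘ fst-lift) for f ∈ A(V₁) (fst-lift f being the affine map (x, y) ↦ f x) and ψ₂ g = ψ (g ∘ snd-lift) for g ∈ A(V₂). Then Λ is injective, and Λ maps the cone C*(K₁ × K₂) bijectively onto {(ψ₁, ψ₂) ∈ C*(K₁) × C*(K₂) | ψ₁ 1 = ψ₂ 1}; that is, the positive dual cone of the direct product state space K₁ × K₂ is exactly the set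 of pairs of positive functionals with equal normalization. -/
open scoped BigOperators

noncomputable section

/-- The lift of an affine function on `V₁` to `V₁ × V₂` via the first projection. -/
def liftFst {V₁ V₂ : Type*} [NormedAddCommGroup V₁] [NormedSpace ℝ V₁]
    [NormedAddCommGroup V₂] [NormedSpace ℝ V₂] (f : V₁ →ᵃ[ℝ] ℝ) : (V₁ × V₂) →ᵃ[ℝ] ℝ :=
  f.comp (LinearMap.fst ℝ V₁ V₂).toAffineMap

/-- The lift of an affine function on `V₂` to `V₁ × V₂` via the second projection. -/
def liftSnd {V₁ V₂ : Type*} [NormedAddCommGroup V₁] [NormedSpace ℝ V₁]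
    [NormedAddCommGroup V₂] [NormedSpace ℝ V₂] (g : V₂ →ᵃ[ℝ] ℝ) : (V₁ × V₂) →ᵃ[ℝ] ℝ :=
  g.comp (LinearMap.snd ℝ V₁ V₂).toAffineMap

/-- First component of `Λ`: restriction of a functional on `A(V₁ × V₂)` to functions
pulled back from `V₁`. -/
def lamFst {V₁ V₂ : Type*} [NormedAddCommGroup V₁] [NormedSpace ℝ V₁]
    [NormedAddCommGroup V₂] [NormedSpace ℝ V₂]
    (ψ : ((V₁ × V₂) →ᵃ[ℝ] ℝ) →ₗ[ℝ] ℝ) : (V₁ →ᵃ[ℝ] ℝ) →ₗ[ℝ] ℝ where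
  toFun f := ψ (liftFst f)
  map_add' f g := by
    show ψ (liftFst (f + g)) = ψ (liftFst f) + ψ (liftFst g)
    rw [show liftFst (f + g) = liftFst f + liftFst (V₁ := V₁) (V₂ := V₂) g from
      AffineMap.ext fun x => rfl, map_add]
  map_smul' c f := by
    show ψ (liftFst (c • f)) = c • ψ (liftFst f)
    rw [show liftFst (c • f) = c • liftFst (V₁ := V₁) (V₂ := V₂) f from
      AffineMap.ext fun x => rfl, map_smul]

/-- Second component of `Λ`. -/
def lamSnd {V₁ V₂ : Type*} [NormedAddCommGroup V₁] [NormedSpace ℝ V₁]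
    [NormedAddCommGroup V₂] [NormedSpace ℝ V₂]
    (ψ : ((V₁ × V₂) →ᵃ[ℝ] ℝ) →ₗ[ℝ] ℝ) : (V₂ →ᵃ[ℝ] ℝ) →ₗ[ℝ] ℝ where
  toFun g := ψ (liftSnd g)
  map_add' f g := by
    show ψ (liftSnd (f + g)) = ψ (liftSnd f) + ψ (liftSnd g)
    rw [show liftSnd (f + g) = liftSnd f + liftSnd (V₁ := V₁) (V₂ := V₂) g from
      AffineMap.ext fun x => rfl, map_add]
  map_smul' c f := by
    show ψ (liftSnd (c • f)) = c • ψ (liftSnd f)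
    rw [show liftSnd (c • f) = c • liftSnd (V₁ := V₁) (V₂ := V₂) f from
      AffineMap.ext fun x => rfl, map_smul]

/-- The map `Λ` sending a functional on `A(V₁ × V₂)` to its pair of restrictions. -/
def lam {V₁ V₂ : Type*} [NormedAddCommGroup V₁] [NormedSpace ℝ V₁]
    [NormedAddCommGroup V₂] [NormedSpace ℝ V₂]
    (ψ : ((V₁ × V₂) →ᵃ[ℝ] ℝ) →ₗ[ℝ] ℝ) :
    ((V₁ →ᵃ[ℝ] ℝ) →ₗ[ℝ] ℝ) × ((V₂ →ᵃ[ℝ] ℝ) →ₗ[ℝ] ℝ) :=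
  (lamFst ψ, lamSnd ψ)

/-! An affine function `h` on `V₁ × V₂` splits as `h (x, y) = h₁ x + h₂ y`, so a functional on
`A(V₁ × V₂)` is determined by its two restrictions, and a compatible pair `(ψ₁, ψ₂)` glues to
`h ↦ ψ₁ h₁ + ψ₂ h₂`. If `h ≥ 0` on `K₁ × K₂`, then a constant `m` between `sup (-h₁)` over `K₁` and
`inf h₂` over `K₂` gives `h₁ + m ≥ 0` on `K₁` and `h₂ - m ≥ 0` on `K₂`; the equal normalizations
make `m` cancel, so the glued functional is positive. -/

lemma exists_forall_nonneg_add_and_forall_le {α β : Type*} {s : Set α} {t : Set β}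
    {f : α → ℝ} {g : β → ℝ} (hs : s.Nonempty) (ht : t.Nonempty)
    (h : ∀ x ∈ s, ∀ y ∈ t, 0 ≤ f x + g y) :
    ∃ m : ℝ, (∀ x ∈ s, 0 ≤ f x + m) ∧ ∀ y ∈ t, m ≤ g y := by
  have lower_bound : ∀ x ∈ s, ∀ z ∈ g '' t, -f x ≤ z := by
    rintro x hx _ ⟨y, hy, rfl⟩
    linarith [h x hx y hy]
  obtain ⟨x₀, hx₀⟩ := hs
  refine ⟨sInf (g '' t), fun x hx => ?_, fun y hy => ?_⟩
  · linarith [le_csInf (ht.image g) (lower_bound x hx)]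
  · exact csInf_le ⟨-f x₀, lower_bound x₀ hx₀⟩ (Set.mem_image_of_mem g hy)

lemma AffineMap.const_eq_smul_const_one (V : Type*) [AddCommGroup V] [Module ℝ V] (c : ℝ) :
    AffineMap.const ℝ V c = c • AffineMap.const ℝ V (1 : ℝ) := by
  ext
  simp

section Product

variable {V₁ V₂ : Type*} [NormedAddCommGroup V₁] [NormedSpace ℝ V₁]
  [NormedAddCommGroup V₂] [NormedSpace ℝ V₂]

@[simp]
lemma liftFst_apply (f : V₁ →ᵃ[ℝ] ℝ) (p : V₁ × V₂) : liftFst f p = f p.1 := rfl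

@[simp]
lemma liftSnd_apply (g : V₂ →ᵃ[ℝ] ℝ) (p : V₁ × V₂) : liftSnd g p = g p.2 := rfl

lemma lamFst_apply (ψ : ((V₁ × V₂) →ᵃ[ℝ] ℝ) →ₗ[ℝ] ℝ) (f : V₁ →ᵃ[ℝ] ℝ) :
    lamFst ψ f = ψ (liftFst f) := rfl

lemma lamSnd_apply (ψ : ((V₁ × V₂) →ᵃ[ℝ] ℝ) →ₗ[ℝ] ℝ) (g : V₂ →ᵃ[ℝ] ℝ) :
    lamSnd ψ g = ψ (liftSnd g) := rfl

def decompFst : ((V₁ × V₂) →ᵃ[ℝ] ℝ) →ₗ[ℝ] (V₁ →ᵃ[ℝ] ℝ) where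
  toFun h := h.comp (LinearMap.inl ℝ V₁ V₂).toAffineMap
  map_add' _ _ := rfl
  map_smul' _ _ := rfl

/-- Subtracting `h 0` makes `liftFst (decompFst h) + liftSnd (decompSnd h) = h`. -/
def decompSnd : ((V₁ × V₂) →ᵃ[ℝ] ℝ) →ₗ[ℝ] (V₂ →ᵃ[ℝ] ℝ) where
  toFun h := h.comp (LinearMap.inr ℝ V₁ V₂).toAffineMap - AffineMap.const ℝ V₂ (h 0)
  map_add' h h' := by
    ext y
    simp only [AffineMap.coe_sub, AffineMap.coe_add, AffineMap.coe_comp, Pi.sub_apply,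
      Pi.add_apply, Function.comp_apply, AffineMap.const_apply]
    ring
  map_smul' c h := by
    ext y
    simp only [AffineMap.coe_sub, AffineMap.coe_smul, AffineMap.coe_comp, Pi.sub_apply,
      Pi.smul_apply, Function.comp_apply, AffineMap.const_apply, smul_eq_mul, RingHom.id_apply]
    ring

@[simp]
lemma decompFst_apply (h : (V₁ × V₂) →ᵃ[ℝ] ℝ) (x : V₁) : decompFst h x = h (x, 0) := rfl

@[simp]
lemma decompSnd_apply (h : (V₁ × V₂) →ᵃ[ℝ] ℝ) (y : V₂) :
    decompSnd h y = h (0, y) - h 0 := rfl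

lemma decompFst_apply_add_decompSnd_apply (h : (V₁ × V₂) →ᵃ[ℝ] ℝ) (x : V₁) (y : V₂) :
    decompFst h x + decompSnd h y = h (x, y) := by
  have h_decomp (p : V₁ × V₂) : h p = h.linear p + h 0 := congrFun h.decomp p
  have hxy : ((x, y) : V₁ × V₂) = (x, 0) + (0, y) := by simp
  rw [decompFst_apply, decompSnd_apply, h_decomp (x, y), h_decomp (x, 0), h_decomp (0, y), hxy,
    map_add]
  ring

lemma liftFst_decompFst_add_liftSnd_decompSnd (h : (V₁ × V₂) →ᵃ[ℝ] ℝ) :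
    liftFst (decompFst h) + liftSnd (decompSnd h) = h := by
  ext ⟨x, y⟩
  exact decompFst_apply_add_decompSnd_apply h x y

@[simp]
lemma decompFst_liftFst (f : V₁ →ᵃ[ℝ] ℝ) : decompFst (liftFst (V₂ := V₂) f) = f := rfl

@[simp]
lemma decompSnd_liftFst (f : V₁ →ᵃ[ℝ] ℝ) : decompSnd (liftFst (V₂ := V₂) f) = 0 := by
  ext
  simp

@[simp]
lemma decompFst_liftSnd (g : V₂ →ᵃ[ℝ] ℝ) :
    decompFst (liftSnd (V₁ := V₁) g) = AffineMap.const ℝ V₁ (g 0) := by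
  ext
  rfl

@[simp]
lemma decompSnd_liftSnd (g : V₂ →ᵃ[ℝ] ℝ) :
    decompSnd (liftSnd (V₁ := V₁) g) = g - AffineMap.const ℝ V₂ (g 0) := by
  ext
  simp

lemma lam_injective : Function.Injective (lam (V₁ := V₁) (V₂ := V₂)) := by
  intro ψ ψ' hψ
  have hFst : lamFst ψ = lamFst ψ' := congrArg Prod.fst hψ
  have hSnd : lamSnd ψ = lamSnd ψ' := congrArg Prod.snd hψ
  ext h
  rw [← liftFst_decompFst_add_liftSnd_decompSnd h, map_add, map_add, ← lamFst_apply,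
    ← lamFst_apply, ← lamSnd_apply, ← lamSnd_apply, hFst, hSnd]

lemma lamFst_mem_posDual {K₁ : Set V₁} {K₂ : Set V₂} {ψ : ((V₁ × V₂) →ᵃ[ℝ] ℝ) →ₗ[ℝ] ℝ}
    (hψ : ψ ∈ posDual (K₁ ×ˢ K₂)) : lamFst ψ ∈ posDual K₁ :=
  fun f hf => hψ (liftFst f) fun p hp => hf p.1 hp.1

lemma lamSnd_mem_posDual {K₁ : Set V₁} {K₂ : Set V₂} {ψ : ((V₁ × V₂) →ᵃ[ℝ] ℝ) →ₗ[ℝ] ℝ}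
    (hψ : ψ ∈ posDual (K₁ ×ˢ K₂)) : lamSnd ψ ∈ posDual K₂ :=
  fun g hg => hψ (liftSnd g) fun p hp => hg p.2 hp.2

lemma lamFst_const_one_eq_lamSnd_const_one (ψ : ((V₁ × V₂) →ᵃ[ℝ] ℝ) →ₗ[ℝ] ℝ) :
    lamFst ψ (AffineMap.const ℝ V₁ (1 : ℝ)) = lamSnd ψ (AffineMap.const ℝ V₂ (1 : ℝ)) := rfl

def glue (ψ₁ : (V₁ →ᵃ[ℝ] ℝ) →ₗ[ℝ] ℝ) (ψ₂ : (V₂ →ᵃ[ℝ] ℝ) →ₗ[ℝ] ℝ) :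
    ((V₁ × V₂) →ᵃ[ℝ] ℝ) →ₗ[ℝ] ℝ :=
  ψ₁ ∘ₗ decompFst + ψ₂ ∘ₗ decompSnd

lemma glue_apply (ψ₁ : (V₁ →ᵃ[ℝ] ℝ) →ₗ[ℝ] ℝ) (ψ₂ : (V₂ →ᵃ[ℝ] ℝ) →ₗ[ℝ] ℝ)
    (h : (V₁ × V₂) →ᵃ[ℝ] ℝ) : glue ψ₁ ψ₂ h = ψ₁ (decompFst h) + ψ₂ (decompSnd h) := rfl

variable {ψ₁ : (V₁ →ᵃ[ℝ] ℝ) →ₗ[ℝ] ℝ} {ψ₂ : (V₂ →ᵃ[ℝ] ℝ) →ₗ[ℝ] ℝ}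

lemma lam_glue
    (hnorm : ψ₁ (AffineMap.const ℝ V₁ (1 : ℝ)) = ψ₂ (AffineMap.const ℝ V₂ (1 : ℝ))) :
    lam (glue ψ₁ ψ₂) = (ψ₁, ψ₂) := by
  refine Prod.ext (LinearMap.ext fun f => ?_) (LinearMap.ext fun g => ?_)
  · simp [lam, lamFst_apply, glue_apply]
  · simp only [lam, lamSnd_apply, glue_apply, decompFst_liftSnd, decompSnd_liftSnd, map_sub,
      AffineMap.const_eq_smul_const_one V₁ (g 0), AffineMap.const_eq_smul_const_one V₂ (g 0),
      map_smul, hnorm]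
    abel

lemma glue_mem_posDual {K₁ : Set V₁} {K₂ : Set V₂} (hne₁ : K₁.Nonempty) (hne₂ : K₂.Nonempty)
    (hψ₁ : ψ₁ ∈ posDual K₁) (hψ₂ : ψ₂ ∈ posDual K₂)
    (hnorm : ψ₁ (AffineMap.const ℝ V₁ (1 : ℝ)) = ψ₂ (AffineMap.const ℝ V₂ (1 : ℝ))) :
    glue ψ₁ ψ₂ ∈ posDual (K₁ ×ˢ K₂) := by
  intro h hh
  obtain ⟨m, hm₁, hm₂⟩ := exists_forall_nonneg_add_and_forall_le hne₁ hne₂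
    fun x hx y hy => (decompFst_apply_add_decompSnd_apply h x y).symm ▸ hh (x, y) ⟨hx, hy⟩
  have hpos₁ : 0 ≤ ψ₁ (decompFst h + AffineMap.const ℝ V₁ m) := hψ₁ _ hm₁
  have hpos₂ : 0 ≤ ψ₂ (decompSnd h - AffineMap.const ℝ V₂ m) :=
    hψ₂ _ fun y hy => sub_nonneg.mpr (hm₂ y hy)
  rw [map_add, AffineMap.const_eq_smul_const_one V₁ m, map_smul, hnorm] at hpos₁
  rw [map_sub, AffineMap.const_eq_smul_const_one V₂ m, map_smul] at hpos₂
  rw [glue_apply]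
  linarith

end Product

theorem lam_injective_and_image_general {V₁ V₂ : Type*}
    [NormedAddCommGroup V₁] [NormedSpace ℝ V₁]
    [NormedAddCommGroup V₂] [NormedSpace ℝ V₂]
    (K₁ : Set V₁) (K₂ : Set V₂) (hne₁ : K₁.Nonempty) (hne₂ : K₂.Nonempty) :
    Function.Injective (lam (V₁ := V₁) (V₂ := V₂)) ∧
    lam '' posDual (K₁ ×ˢ K₂) =
      {p : ((V₁ →ᵃ[ℝ] ℝ) →ₗ[ℝ] ℝ) × ((V₂ →ᵃ[ℝ] ℝ) →ₗ[ℝ] ℝ) |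
        p.1 ∈ posDual K₁ ∧ p.2 ∈ posDual K₂ ∧
        p.1 (AffineMap.const ℝ V₁ (1 : ℝ)) = p.2 (AffineMap.const ℝ V₂ (1 : ℝ))} := by
  refine ⟨lam_injective, Set.Subset.antisymm ?_ ?_⟩
  · rintro _ ⟨ψ, hψ, rfl⟩
    exact ⟨lamFst_mem_posDual hψ, lamSnd_mem_posDual hψ, lamFst_const_one_eq_lamSnd_const_one ψ⟩
  · rintro ⟨ψ₁, ψ₂⟩ ⟨hψ₁, hψ₂, hnorm⟩
    exact ⟨glue ψ₁ ψ₂, glue_mem_posDual hne₁ hne₂ hψ₁ hψ₂ hnorm, lam_glue hnorm⟩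

/-- `Λ` is injective and maps the positive dual cone of the direct product
state space `K₁ × K₂` bijectively onto the pairs of positive functionals with equal
normalization. -/
theorem lam_injective_and_image {V₁ V₂ : Type*}
    [NormedAddCommGroup V₁] [NormedSpace ℝ V₁] [FiniteDimensional ℝ V₁]
    [NormedAddCommGroup V₂] [NormedSpace ℝ V₂] [FiniteDimensional ℝ V₂]
    (K₁ : Set V₁) (K₂ : Set V₂) (hne₁ : K₁.Nonempty) (hne₂ : K₂.Nonempty)
    (hcomp₁ : IsCompact K₁) (hcomp₂ : IsCompact K₂)
    (hconv₁ : Convex ℝ K₁) (hconv₂ : Convex ℝ K₂) :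
    Function.Injective (lam (V₁ := V₁) (V₂ := V₂)) ∧
    lam '' posDual (K₁ ×ˢ K₂) =
      {p : ((V₁ →ᵃ[ℝ] ℝ) →ₗ[ℝ] ℝ) × ((V₂ →ᵃ[ℝ] ℝ) →ₗ[ℝ] ℝ) |
        p.1 ∈ posDual K₁ ∧ p.2 ∈ posDual K₂ ∧
        p.1 (AffineMap.const ℝ V₁ (1 : ℝ)) = p.2 (AffineMap.const ℝ V₂ (1 : ℝ))} :=
  lam_injective_and_image_general K₁ K₂ hne₁ hne₂

end
end

section
/- Let U, V₁, V₂ be finite-dimensional real vector spaces and let e₁ : V₁ → ℝ, e₂ : V₂ → ℝ be nonzero linear functionals. For all ξ₁ ∈ U ⊗ V₁ and ξ₂ ∈ U ⊗ V₂ satisfying (id_U ⊗ e₁)(ξ₁) = (id_U ⊗ e₂)(ξ₂) (as elements of U, under the identification U ⊗ ℝ ≅ U), there exists Ξ ∈ U ⊗ V₁ ⊗ V₂ such that J(Ξ) = (ξ₁, ξ₂), i.e. (id_U ⊗ id_{V₁} ⊗ e₂)(Ξ) = ξ₁ and (id_U ⊗ e₁ ⊗ id_{V₂})(Ξ) = ξ₂.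 -/
open scoped BigOperators TensorProduct

noncomputable section

/-- Contraction of the second tensor factor with the functional `e₂`. -/
def ctrR (V₁ V₂ : Type*) [AddCommGroup V₁] [Module ℝ V₁]
    [AddCommGroup V₂] [Module ℝ V₂] (e₂ : Module.Dual ℝ V₂) :
    V₁ ⊗[ℝ] V₂ →ₗ[ℝ] V₁ :=
  (TensorProduct.rid ℝ V₁).toLinearMap.comp (TensorProduct.map LinearMap.id e₂)

/-- Contraction of the first tensor factor with the functional `e₁`. -/
def ctrL (V₁ V₂ : Type*) [AddCommGroup V₁] [Module ℝ V₁]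
    [AddCommGroup V₂] [Module ℝ V₂] (e₁ : Module.Dual ℝ V₁) :
    V₁ ⊗[ℝ] V₂ →ₗ[ℝ] V₂ :=
  (TensorProduct.lid ℝ V₂).toLinearMap.comp (TensorProduct.map e₁ LinearMap.id)

/-- The map `J : U ⊗ V₁ ⊗ V₂ → (U ⊗ V₁) × (U ⊗ V₂)` determined on elementary tensors by
`J(u ⊗ v₁ ⊗ v₂) = ((e₂ v₂) • u ⊗ v₁, (e₁ v₁) • u ⊗ v₂)`. -/
def Jmap (U V₁ V₂ : Type*) [AddCommGroup U] [Module ℝ U]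
    [AddCommGroup V₁] [Module ℝ V₁] [AddCommGroup V₂] [Module ℝ V₂]
    (e₁ : Module.Dual ℝ V₁) (e₂ : Module.Dual ℝ V₂) :
    U ⊗[ℝ] (V₁ ⊗[ℝ] V₂) →ₗ[ℝ] (U ⊗[ℝ] V₁) × (U ⊗[ℝ] V₂) :=
  (TensorProduct.map LinearMap.id (ctrR V₁ V₂ e₂)).prod
    (TensorProduct.map LinearMap.id (ctrL V₁ V₂ e₁))

/-- The marginal map `(id ⊗ e) : U ⊗ V → U`. -/
def margin (U V : Type*) [AddCommGroup U] [Module ℝ U] [AddCommGroup V] [Module ℝ V]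
    (e : Module.Dual ℝ V) : U ⊗[ℝ] V →ₗ[ℝ] U :=
  (TensorProduct.rid ℝ U).toLinearMap.comp (TensorProduct.map LinearMap.id e)

/-- if `ξ₁` and `ξ₂` have equal contractions against the nonzero functionals
`e₁`, `e₂`, then they arise jointly as `J(Ξ)` for some `Ξ ∈ U ⊗ V₁ ⊗ V₂`. -/
theorem exists_Jmap_preimage {U V₁ V₂ : Type*}
    [AddCommGroup U] [Module ℝ U] [FiniteDimensional ℝ U]
    [AddCommGroup V₁] [Module ℝ V₁] [FiniteDimensional ℝ V₁]
    [AddCommGroup V₂] [Module ℝ V₂] [FiniteDimensional ℝ V₂]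
    (e₁ : Module.Dual ℝ V₁) (e₂ : Module.Dual ℝ V₂) (he₁ : e₁ ≠ 0) (he₂ : e₂ ≠ 0)
    (ξ₁ : U ⊗[ℝ] V₁) (ξ₂ : U ⊗[ℝ] V₂)
    (h : margin U V₁ e₁ ξ₁ = margin U V₂ e₂ ξ₂) :
    ∃ Ξ : U ⊗[ℝ] (V₁ ⊗[ℝ] V₂), Jmap U V₁ V₂ e₁ e₂ Ξ = (ξ₁, ξ₂) := by
  -- pick v₁, v₂ with e₁ v₁ = 1, e₂ v₂ = 1
  obtain ⟨w₁, hw₁⟩ : ∃ w, e₁ w ≠ 0 := by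
    by_contra hc; push_neg at hc; exact he₁ (LinearMap.ext fun w => hc w)
  obtain ⟨w₂, hw₂⟩ : ∃ w, e₂ w ≠ 0 := by
    by_contra hc; push_neg at hc; exact he₂ (LinearMap.ext fun w => hc w)
  set v₁ : V₁ := (e₁ w₁)⁻¹ • w₁ with hv₁def
  set v₂ : V₂ := (e₂ w₂)⁻¹ • w₂ with hv₂def
  have hv₁ : e₁ v₁ = 1 := by simp [hv₁def, inv_mul_cancel₀ hw₁]
  have hv₂ : e₂ v₂ = 1 := by simp [hv₂def, inv_mul_cancel₀ hw₂]
  set α : V₁ →ₗ[ℝ] V₁ ⊗[ℝ] V₂ := (TensorProduct.mk ℝ V₁ V₂).flip v₂ with hα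
  set β : V₂ →ₗ[ℝ] V₁ ⊗[ℝ] V₂ := TensorProduct.mk ℝ V₁ V₂ v₁ with hβ
  set m : U := margin U V₁ e₁ ξ₁ with hm
  refine ⟨TensorProduct.map LinearMap.id α ξ₁ + TensorProduct.map LinearMap.id β ξ₂
    - m ⊗ₜ[ℝ] (v₁ ⊗ₜ[ℝ] v₂), ?_⟩
  have key1 : ∀ L : V₁ ⊗[ℝ] V₂ →ₗ[ℝ] V₁,
      (TensorProduct.map (LinearMap.id : U →ₗ[ℝ] U) L).comp
        (TensorProduct.map LinearMap.id α)
      = TensorProduct.map LinearMap.id (L.comp α) := fun L => by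
    apply TensorProduct.ext'; intro u v; simp
  have key2 : ∀ L : V₁ ⊗[ℝ] V₂ →ₗ[ℝ] V₂,
      (TensorProduct.map (LinearMap.id : U →ₗ[ℝ] U) L).comp
        (TensorProduct.map LinearMap.id α)
      = TensorProduct.map LinearMap.id (L.comp α) := fun L => by
    apply TensorProduct.ext'; intro u v; simp
  have key1' : ∀ L : V₁ ⊗[ℝ] V₂ →ₗ[ℝ] V₁,
      (TensorProduct.map (LinearMap.id : U →ₗ[ℝ] U) L).comp
        (TensorProduct.map LinearMap.id β)
      = TensorProduct.map LinearMap.id (L.comp β) := fun L => by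
    apply TensorProduct.ext'; intro u v; simp
  have key2' : ∀ L : V₁ ⊗[ℝ] V₂ →ₗ[ℝ] V₂,
      (TensorProduct.map (LinearMap.id : U →ₗ[ℝ] U) L).comp
        (TensorProduct.map LinearMap.id β)
      = TensorProduct.map LinearMap.id (L.comp β) := fun L => by
    apply TensorProduct.ext'; intro u v; simp
  -- ctrR e₂ ∘ α = id
  have hRa : (ctrR V₁ V₂ e₂).comp α = LinearMap.id := by
    apply LinearMap.ext; intro v; simp [ctrR, hα, hv₂]
  -- ctrR e₂ ∘ β = e₂.smulRight v₁
  have hRb : (ctrR V₁ V₂ e₂).comp β = e₂.smulRight v₁ := by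
    apply LinearMap.ext; intro w; simp [ctrR, hβ, TensorProduct.smul_tmul']
  -- ctrL e₁ ∘ β = id
  have hLb : (ctrL V₁ V₂ e₁).comp β = LinearMap.id := by
    apply LinearMap.ext; intro w; simp [ctrL, hβ, hv₁]
  -- ctrL e₁ ∘ α = e₁.smulRight v₂
  have hLa : (ctrL V₁ V₂ e₁).comp α = e₁.smulRight v₂ := by
    apply LinearMap.ext; intro v; simp [ctrL, hα, TensorProduct.smul_tmul']
  -- map id (e.smulRight v) ξ = margin e ξ ⊗ v
  have hsr₁ : ∀ ξ : U ⊗[ℝ] V₂,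
      TensorProduct.map LinearMap.id (e₂.smulRight v₁) ξ = (margin U V₂ e₂ ξ) ⊗ₜ[ℝ] v₁ := by
    intro ξ
    have : TensorProduct.map (LinearMap.id : U →ₗ[ℝ] U) (e₂.smulRight v₁)
        = ((TensorProduct.mk ℝ U V₁).flip v₁).comp (margin U V₂ e₂) := by
      apply TensorProduct.ext'; intro u w
      simp [margin, TensorProduct.tmul_smul, TensorProduct.smul_tmul']
    rw [this]; rfl
  have hsr₂ : ∀ ξ : U ⊗[ℝ] V₁,
      TensorProduct.map LinearMap.id (e₁.smulRight v₂) ξ = (margin U V₁ e₁ ξ) ⊗ₜ[ℝ] v₂ := by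
    intro ξ
    have : TensorProduct.map (LinearMap.id : U →ₗ[ℝ] U) (e₁.smulRight v₂)
        = ((TensorProduct.mk ℝ U V₂).flip v₂).comp (margin U V₁ e₁) := by
      apply TensorProduct.ext'; intro u w
      simp [margin, TensorProduct.tmul_smul, TensorProduct.smul_tmul']
    rw [this]; rfl
  have comp₁ : TensorProduct.map LinearMap.id (ctrR V₁ V₂ e₂)
      (TensorProduct.map LinearMap.id α ξ₁ + TensorProduct.map LinearMap.id β ξ₂
        - m ⊗ₜ[ℝ] (v₁ ⊗ₜ[ℝ] v₂)) = ξ₁ := by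
    rw [map_sub, map_add, ← LinearMap.comp_apply, ← LinearMap.comp_apply,
      key1 (ctrR V₁ V₂ e₂), key1' (ctrR V₁ V₂ e₂), hRa, hRb, hsr₁, ← h]
    have : TensorProduct.map (LinearMap.id : U →ₗ[ℝ] U) LinearMap.id ξ₁ = ξ₁ := by
      rw [TensorProduct.map_id]; rfl
    rw [this]
    have : TensorProduct.map (LinearMap.id : U →ₗ[ℝ] U) (ctrR V₁ V₂ e₂)
        (m ⊗ₜ[ℝ] (v₁ ⊗ₜ[ℝ] v₂)) = m ⊗ₜ[ℝ] v₁ := by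
      simp [ctrR, hv₂]
    rw [this]; abel
  have comp₂ : TensorProduct.map LinearMap.id (ctrL V₁ V₂ e₁)
      (TensorProduct.map LinearMap.id α ξ₁ + TensorProduct.map LinearMap.id β ξ₂
        - m ⊗ₜ[ℝ] (v₁ ⊗ₜ[ℝ] v₂)) = ξ₂ := by
    rw [map_sub, map_add, ← LinearMap.comp_apply, ← LinearMap.comp_apply,
      key2 (ctrL V₁ V₂ e₁), key2' (ctrL V₁ V₂ e₁), hLa, hLb, hsr₂, ← hm]
    have : TensorProduct.map (LinearMap.id : U →ₗ[ℝ] U) LinearMap.id ξ₂ = ξ₂ := by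
      rw [TensorProduct.map_id]; rfl
    rw [this]
    have : TensorProduct.map (LinearMap.id : U →ₗ[ℝ] U) (ctrL V₁ V₂ e₁)
        (m ⊗ₜ[ℝ] (v₁ ⊗ₜ[ℝ] v₂)) = m ⊗ₜ[ℝ] v₂ := by
      simp [ctrL, hv₁]
    rw [this]; abel
  simp only [Jmap, LinearMap.prod_apply]
  exact Prod.ext comp₁ comp₂

end
end

section
/- Let U, V₁, V₂ be finite-dimensional real vector spaces, C_U ⊆ U, C₁ ⊆ V₁, C₂ ⊆ V₂ convex cones, and e₁ : V₁ → ℝ, e₂ : V₂ → ℝ linear functionals with eᵢ v > 0 for every nonzero v ∈ Cᵢ (i = 1, 2). Then the image under J of the minimal triple tensor cone {finite sums Σᵢ uᵢ ⊗ vᵢ ⊗ wᵢ : uᵢ ∈ C_U, vᵢ ∈ C₁, wᵢ ∈ C₂} equals the minimal pair tensor cone C_U ⊗min P, i.e. the set of pairs (Σᵢ uᵢ ⊗ vᵢ, Σᵢ uᵢ ⊗ wᵢ) over finite families with uᵢ ∈ C_U and (vᵢ, wᵢ) ∈ P. -/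
open scoped BigOperators TensorProduct

noncomputable section

/-- The minimal triple tensor cone: finite sums of elementary tensors `u ⊗ v ⊗ w` with
components in the given cones. -/
def minTriple {U V₁ V₂ : Type*} [AddCommGroup U] [Module ℝ U]
    [AddCommGroup V₁] [Module ℝ V₁] [AddCommGroup V₂] [Module ℝ V₂]
    (CU : Set U) (C₁ : Set V₁) (C₂ : Set V₂) : Set (U ⊗[ℝ] (V₁ ⊗[ℝ] V₂)) :=
  {Ξ | ∃ (n : ℕ) (u : Fin n → U) (v : Fin n → V₁) (w : Fin n → V₂),
    (∀ i, u i ∈ CU) ∧ (∀ i, v i ∈ C₁) ∧ (∀ i, w i ∈ C₂) ∧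
    Ξ = ∑ i, u i ⊗ₜ[ℝ] (v i ⊗ₜ[ℝ] w i)}

/-- The conditional-state cone `P`: pairs of cone elements with equal normalization. -/
def pairCone {V₁ V₂ : Type*} [AddCommGroup V₁] [Module ℝ V₁]
    [AddCommGroup V₂] [Module ℝ V₂]
    (C₁ : Set V₁) (C₂ : Set V₂) (e₁ : Module.Dual ℝ V₁) (e₂ : Module.Dual ℝ V₂) :
    Set (V₁ × V₂) :=
  {p | p.1 ∈ C₁ ∧ p.2 ∈ C₂ ∧ e₁ p.1 = e₂ p.2}

/-- The minimal pair tensor cone `C_U ⊗min P`. -/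
def minPair {U V₁ V₂ : Type*} [AddCommGroup U] [Module ℝ U]
    [AddCommGroup V₁] [Module ℝ V₁] [AddCommGroup V₂] [Module ℝ V₂]
    (CU : Set U) (P : Set (V₁ × V₂)) : Set ((U ⊗[ℝ] V₁) × (U ⊗[ℝ] V₂)) :=
  {ξ | ∃ (n : ℕ) (u : Fin n → U) (p : Fin n → V₁ × V₂),
    (∀ i, u i ∈ CU) ∧ (∀ i, p i ∈ P) ∧
    ξ.1 = ∑ i, u i ⊗ₜ[ℝ] (p i).1 ∧ ξ.2 = ∑ i, u i ⊗ₜ[ℝ] (p i).2}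

lemma Jmap_tmul {U V₁ V₂ : Type*} [AddCommGroup U] [Module ℝ U]
    [AddCommGroup V₁] [Module ℝ V₁] [AddCommGroup V₂] [Module ℝ V₂]
    (e₁ : Module.Dual ℝ V₁) (e₂ : Module.Dual ℝ V₂) (u : U) (v : V₁) (w : V₂) :
    Jmap U V₁ V₂ e₁ e₂ (u ⊗ₜ[ℝ] (v ⊗ₜ[ℝ] w)) =
      (u ⊗ₜ[ℝ] ((e₂ w) • v), u ⊗ₜ[ℝ] ((e₁ v) • w)) := by
  simp [Jmap, ctrR, ctrL, TensorProduct.tmul_smul, TensorProduct.smul_tmul]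

lemma sum_filter_reindex {M : Type*} [AddCommMonoid M] {n : ℕ} (f : Fin n → M)
    (s : Finset (Fin n)) (h : ∀ i, i ∉ s → f i = 0) :
    ∑ i, f i = ∑ j : Fin s.card, f (s.equivFin.symm j) := by
  rw [← Finset.sum_subset (Finset.subset_univ s) (fun i _ hi => h i hi)]
  rw [← Finset.sum_attach s f]
  exact (Equiv.sum_comp s.equivFin.symm (fun x : s => f x)).symm

/-- the image under `J` of the minimal triple tensor cone equals the minimal
pair tensor cone `C_U ⊗min P`. -/
theorem Jmap_image_minTriple {U V₁ V₂ : Type*}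
    [AddCommGroup U] [Module ℝ U] [FiniteDimensional ℝ U]
    [AddCommGroup V₁] [Module ℝ V₁] [FiniteDimensional ℝ V₁]
    [AddCommGroup V₂] [Module ℝ V₂] [FiniteDimensional ℝ V₂]
    (CU : ConvexCone ℝ U) (C₁ : ConvexCone ℝ V₁) (C₂ : ConvexCone ℝ V₂)
    (e₁ : Module.Dual ℝ V₁) (e₂ : Module.Dual ℝ V₂)
    (he₁ : ∀ v ∈ C₁, v ≠ 0 → 0 < e₁ v) (he₂ : ∀ v ∈ C₂, v ≠ 0 → 0 < e₂ v) :
    Jmap U V₁ V₂ e₁ e₂ '' minTriple (CU : Set U) (C₁ : Set V₁) (C₂ : Set V₂) =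
      minPair (CU : Set U) (pairCone (C₁ : Set V₁) (C₂ : Set V₂) e₁ e₂) := by
  classical
  ext ξ
  constructor
  · rintro ⟨Ξ, ⟨n, u, v, w, hu, hv, hw, rfl⟩, rfl⟩
    set s : Finset (Fin n) := Finset.univ.filter (fun i => v i ≠ 0 ∧ w i ≠ 0) with hs
    refine ⟨s.card, fun j => u (s.equivFin.symm j),
      fun j => ((e₂ (w (s.equivFin.symm j))) • v (s.equivFin.symm j),
                (e₁ (v (s.equivFin.symm j))) • w (s.equivFin.symm j)),
      fun j => hu _, ?_, ?_, ?_⟩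
    · intro j
      obtain ⟨hvne, hwne⟩ : v (s.equivFin.symm j : Fin n) ≠ 0 ∧
          w (s.equivFin.symm j : Fin n) ≠ 0 := by
        have hm : (s.equivFin.symm j : Fin n) ∈
            Finset.univ.filter (fun i => v i ≠ 0 ∧ w i ≠ 0) := by
          rw [← hs]; exact (s.equivFin.symm j).2
        exact (Finset.mem_filter.mp hm).2
      refine ⟨C₁.smul_mem (he₂ _ (hw _) hwne) (hv _),
        C₂.smul_mem (he₁ _ (hv _) hvne) (hw _), ?_⟩
      simp [mul_comm]
    · rw [map_sum]
      have : ∀ i, (Jmap U V₁ V₂ e₁ e₂ (u i ⊗ₜ[ℝ] (v i ⊗ₜ[ℝ] w i))).1 =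
          u i ⊗ₜ[ℝ] ((e₂ (w i)) • v i) := fun i => by rw [Jmap_tmul]
      simp only [Prod.fst_sum, this]
      refine sum_filter_reindex _ s (fun i hi => ?_)
      have : v i = 0 ∨ w i = 0 := by
        by_contra hc
        push_neg at hc
        exact hi (by rw [hs, Finset.mem_filter]; exact ⟨Finset.mem_univ _, hc.1, hc.2⟩)
      rcases this with h | h <;> simp [h]
    · rw [map_sum]
      have : ∀ i, (Jmap U V₁ V₂ e₁ e₂ (u i ⊗ₜ[ℝ] (v i ⊗ₜ[ℝ] w i))).2 =
          u i ⊗ₜ[ℝ] ((e₁ (v i)) • w i) := fun i => by rw [Jmap_tmul]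
      simp only [Prod.snd_sum, this]
      refine sum_filter_reindex _ s (fun i hi => ?_)
      have : v i = 0 ∨ w i = 0 := by
        by_contra hc
        push_neg at hc
        exact hi (by rw [hs, Finset.mem_filter]; exact ⟨Finset.mem_univ _, hc.1, hc.2⟩)
      rcases this with h | h <;> simp [h]
  · rintro ⟨n, u, p, hu, hp, h1, h2⟩
    set s : Finset (Fin n) := Finset.univ.filter (fun i => e₁ (p i).1 ≠ 0) with hs
    have hzero : ∀ i ∉ s, (p i).1 = 0 ∧ (p i).2 = 0 := by
      intro i hi
      have he : e₁ (p i).1 = 0 := by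
        by_contra hne
        exact hi (by rw [hs, Finset.mem_filter]; exact ⟨Finset.mem_univ _, hne⟩)
      have h1z : (p i).1 = 0 := by
        by_contra hne
        exact absurd he (ne_of_gt (he₁ _ (hp i).1 hne))
      have h2z : (p i).2 = 0 := by
        by_contra hne
        have := he₂ _ (hp i).2.1 hne
        rw [← (hp i).2.2, he] at this
        exact lt_irrefl _ this
      exact ⟨h1z, h2z⟩
    have hpos : ∀ j : Fin s.card, 0 < e₁ (p (s.equivFin.symm j : Fin n)).1 := by
      intro j
      have hne : e₁ (p (s.equivFin.symm j : Fin n)).1 ≠ 0 := by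
        have hm : (s.equivFin.symm j : Fin n) ∈
            Finset.univ.filter (fun i => e₁ (p i).1 ≠ 0) := by
          rw [← hs]; exact (s.equivFin.symm j).2
        exact (Finset.mem_filter.mp hm).2
      have h1z : (p (s.equivFin.symm j : Fin n)).1 ≠ 0 := fun h => hne (by simp [h])
      exact he₁ _ (hp _).1 h1z
    refine ⟨∑ j : Fin s.card,
      u (s.equivFin.symm j : Fin n) ⊗ₜ[ℝ]
        (((e₁ (p (s.equivFin.symm j : Fin n)).1)⁻¹ • (p (s.equivFin.symm j : Fin n)).1)
          ⊗ₜ[ℝ] (p (s.equivFin.symm j : Fin n)).2),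
      ⟨s.card, _, _, _, fun j => hu _,
        fun j => C₁.smul_mem (inv_pos.mpr (hpos j)) (hp _).1,
        fun j => (hp _).2.1, rfl⟩, ?_⟩
    rw [map_sum]
    have key : ∀ j : Fin s.card,
        Jmap U V₁ V₂ e₁ e₂
          (u (s.equivFin.symm j : Fin n) ⊗ₜ[ℝ]
            (((e₁ (p (s.equivFin.symm j : Fin n)).1)⁻¹ • (p (s.equivFin.symm j : Fin n)).1)
              ⊗ₜ[ℝ] (p (s.equivFin.symm j : Fin n)).2)) =
          (u (s.equivFin.symm j : Fin n) ⊗ₜ[ℝ] (p (s.equivFin.symm j : Fin n)).1,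
           u (s.equivFin.symm j : Fin n) ⊗ₜ[ℝ] (p (s.equivFin.symm j : Fin n)).2) := by
      intro j
      rw [Jmap_tmul]
      have ht := (hpos j).ne'
      have heq := (hp (s.equivFin.symm j : Fin n)).2.2
      congr 1
      · rw [← heq, smul_smul, mul_inv_cancel₀ ht, one_smul]
      · rw [map_smul, smul_eq_mul, inv_mul_cancel₀ ht, one_smul]
    simp only [key]
    ext
    · simp only [Prod.fst_sum, h1]
      exact (sum_filter_reindex (fun i => u i ⊗ₜ[ℝ] (p i).1) s
        (fun i hi => by simp [(hzero i hi).1])).symm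
    · simp only [Prod.snd_sum, h2]
      exact (sum_filter_reindex (fun i => u i ⊗ₜ[ℝ] (p i).2) s
        (fun i hi => by simp [(hzero i hi).2])).symm

end
end

section
/- Let U, V₁, V₂ be finite-dimensional real vector spaces, C_U ⊆ U, C₁ ⊆ V₁, C₂ ⊆ V₂ convex cones, e₁ : V₁ → ℝ, e₂ : V₂ → ℝ linear functionals with eᵢ v > 0 for every nonzero v ∈ Cᵢ, and let D ⊆ V₁ ⊗ V₂ be a convex cone with C₁ ⊗min C₂ ⊆ D. Then every element of the minimal pair tensor cone C_U ⊗min P lies in J(C_U ⊗max D): for every pair (ξ₁, ξ₂) of the form (Σᵢ uᵢ ⊗ vᵢ, Σᵢ uᵢ ⊗ wᵢ) with uᵢ ∈ C_U and (vᵢ, wᵢ) ∈ P there exists Ξ ∈ C_U ⊗max D with J(Ξ) = (ξ₁, ξ₂). -/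
open scoped BigOperators TensorProduct

noncomputable section

/-- every element of the minimal pair tensor cone `C_U ⊗min P` has a
`J`-preimage in the maximal tensor cone `C_U ⊗max D`, whenever `C₁ ⊗min C₂ ⊆ D`. -/
theorem minPair_subset_Jmap_maxTensor {U V₁ V₂ : Type*}
    [AddCommGroup U] [Module ℝ U] [FiniteDimensional ℝ U]
    [AddCommGroup V₁] [Module ℝ V₁] [FiniteDimensional ℝ V₁]
    [AddCommGroup V₂] [Module ℝ V₂] [FiniteDimensional ℝ V₂]
    (CU : ConvexCone ℝ U) (C₁ : ConvexCone ℝ V₁) (C₂ : ConvexCone ℝ V₂)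
    (e₁ : Module.Dual ℝ V₁) (e₂ : Module.Dual ℝ V₂)
    (he₁ : ∀ v ∈ C₁, v ≠ 0 → 0 < e₁ v) (he₂ : ∀ v ∈ C₂, v ≠ 0 → 0 < e₂ v)
    (D : ConvexCone ℝ (V₁ ⊗[ℝ] V₂))
    (hD : minTensor (C₁ : Set V₁) (C₂ : Set V₂) ⊆ (D : Set (V₁ ⊗[ℝ] V₂))) :
    ∀ ξ ∈ minPair (CU : Set U) (pairCone (C₁ : Set V₁) (C₂ : Set V₂) e₁ e₂),
      ∃ Ξ ∈ maxTensor (CU : Set U) (D : Set (V₁ ⊗[ℝ] V₂)),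
        Jmap U V₁ V₂ e₁ e₂ Ξ = ξ := by
  rintro ⟨ξ₁, ξ₂⟩ ⟨n, u, p, hu, hp, h1, h2⟩
  simp only at h1 h2
  set σ : Fin n → ℝ := fun i => if e₁ (p i).1 = 0 then 0 else (e₁ (p i).1)⁻¹ with hσdef
  have hσ0 : ∀ i, 0 ≤ σ i := by
    intro i
    by_cases h : e₁ (p i).1 = 0
    · simp [hσdef, h]
    · have hv : (p i).1 ≠ 0 := fun hv0 => h (by simp [hv0])
      have := he₁ (p i).1 (hp i).1 hv
      simp [hσdef, h, le_of_lt, inv_pos.mpr this]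
  have hzero : ∀ i, e₁ (p i).1 = 0 → (p i).1 = 0 ∧ (p i).2 = 0 := by
    intro i h
    have h2' : e₂ (p i).2 = 0 := by rw [← (hp i).2.2]; exact h
    constructor
    · by_contra hv
      exact absurd h (ne_of_gt (he₁ (p i).1 (hp i).1 hv))
    · by_contra hw
      exact absurd h2' (ne_of_gt (he₂ (p i).2 (hp i).2.1 hw))
  refine ⟨∑ i, σ i • u i ⊗ₜ[ℝ] ((p i).1 ⊗ₜ[ℝ] (p i).2), ?_, ?_⟩
  · intro f g hf hg
    rw [map_sum]
    apply Finset.sum_nonneg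
    intro i _
    have hterm : tensorDual f g (σ i • u i ⊗ₜ[ℝ] ((p i).1 ⊗ₜ[ℝ] (p i).2))
        = σ i * (f (u i) * g ((p i).1 ⊗ₜ[ℝ] (p i).2)) := by
      simp [tensorDual, mul_assoc]
    rw [hterm]
    have hg' : 0 ≤ g ((p i).1 ⊗ₜ[ℝ] (p i).2) := by
      apply hg
      apply hD
      exact ⟨1, fun _ => (p i).1, fun _ => (p i).2, fun _ => (hp i).1,
        fun _ => (hp i).2.1, by simp⟩
    exact mul_nonneg (hσ0 i) (mul_nonneg (hf _ (hu i)) hg')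
  · rw [map_sum]
    have hterm : ∀ i, Jmap U V₁ V₂ e₁ e₂ (σ i • u i ⊗ₜ[ℝ] ((p i).1 ⊗ₜ[ℝ] (p i).2))
        = (u i ⊗ₜ[ℝ] (p i).1, u i ⊗ₜ[ℝ] (p i).2) := by
      intro i
      have hJ : Jmap U V₁ V₂ e₁ e₂ (σ i • u i ⊗ₜ[ℝ] ((p i).1 ⊗ₜ[ℝ] (p i).2))
          = ((σ i * e₂ (p i).2) • u i ⊗ₜ[ℝ] (p i).1,
             (σ i * e₁ (p i).1) • u i ⊗ₜ[ℝ] (p i).2) := by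
        simp [Jmap, ctrR, ctrL, TensorProduct.smul_tmul', smul_smul, mul_comm]
      rw [hJ]
      by_cases h : e₁ (p i).1 = 0
      · have := hzero i h
        simp [this.1, this.2]
      · have he : e₂ (p i).2 = e₁ (p i).1 := ((hp i).2.2).symm
        simp [hσdef, h, he, inv_mul_cancel₀ h]
    rw [Prod.ext_iff]
    constructor
    · simp only [Prod.fst_sum, h1]
      exact Finset.sum_congr rfl fun i _ => by rw [hterm i]
    · simp only [Prod.snd_sum, h2]
      exact Finset.sum_congr rfl fun i _ => by rw [hterm i]

end
end

section
/- Let U, V₁, V₂ be finite-dimensional real vector spaces, C_U ⊆ U a convex cone, C₁ ⊆ V₁ and C₂ ⊆ V₂ closed convex cones each containing a nonzero vector, and e₁ : V₁ → ℝ, e₂ : V₂ → ℝ linear functionals with eᵢ v > 0 for every nonzero v ∈ Cᵢ. Let D ⊆ V₁ ⊗ V₂ be a convex cone with D ⊆ C₁ ⊗max C₂. Then J(C_U ⊗max D) is contained in the maximal pair tensor cone C_U ⊗max P: for every Ξ ∈ C_U ⊗max D, every α ∈ Module.Dual ℝ U nonnegative on C_U, and every pair of functionals (g₁, g₂) ∈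 V₁* × V₂* with g₁ v₁ + g₂ v₂ ≥ 0 for all (v₁, v₂) ∈ P, one has (α ⊗ g₁)(first component of J(Ξ)) + (α ⊗ g₂)(second component of J(Ξ)) ≥ 0. -/
open scoped BigOperators TensorProduct

noncomputable section

/-- `J` maps the maximal tensor cone `C_U ⊗max D` into the maximal pair
tensor cone `C_U ⊗max P`, tested against products of a functional nonnegative on `C_U`
with pairs of functionals nonnegative on `P`. -/
theorem Jmap_maxTensor_subset_maxPair {U V₁ V₂ : Type*}
    [AddCommGroup U] [Module ℝ U] [FiniteDimensional ℝ U]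
    [NormedAddCommGroup V₁] [NormedSpace ℝ V₁] [FiniteDimensional ℝ V₁]
    [NormedAddCommGroup V₂] [NormedSpace ℝ V₂] [FiniteDimensional ℝ V₂]
    (CU : ConvexCone ℝ U) (C₁ : ConvexCone ℝ V₁) (C₂ : ConvexCone ℝ V₂)
    (hC₁closed : IsClosed (C₁ : Set V₁)) (hC₂closed : IsClosed (C₂ : Set V₂))
    (hC₁ne : ∃ v ∈ C₁, v ≠ 0) (hC₂ne : ∃ w ∈ C₂, w ≠ 0)
    (e₁ : Module.Dual ℝ V₁) (e₂ : Module.Dual ℝ V₂)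
    (he₁ : ∀ v ∈ C₁, v ≠ 0 → 0 < e₁ v) (he₂ : ∀ v ∈ C₂, v ≠ 0 → 0 < e₂ v)
    (D : ConvexCone ℝ (V₁ ⊗[ℝ] V₂))
    (hD : (D : Set (V₁ ⊗[ℝ] V₂)) ⊆ maxTensor (C₁ : Set V₁) (C₂ : Set V₂)) :
    ∀ Ξ ∈ maxTensor (CU : Set U) (D : Set (V₁ ⊗[ℝ] V₂)),
      ∀ α : Module.Dual ℝ U, (∀ u ∈ CU, 0 ≤ α u) →
      ∀ g₁ : Module.Dual ℝ V₁, ∀ g₂ : Module.Dual ℝ V₂,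
        (∀ p ∈ pairCone (C₁ : Set V₁) (C₂ : Set V₂) e₁ e₂, 0 ≤ g₁ p.1 + g₂ p.2) →
        0 ≤ tensorDual α g₁ (Jmap U V₁ V₂ e₁ e₂ Ξ).1 +
            tensorDual α g₂ (Jmap U V₁ V₂ e₁ e₂ Ξ).2 := by
  intro Xi hXi α hα g₁ g₂ hg
  -- bases of the cones
  set B₁ : Set V₁ := {v | v ∈ (C₁ : Set V₁) ∧ e₁ v = 1} with hB₁
  set B₂ : Set V₂ := {v | v ∈ (C₂ : Set V₂) ∧ e₂ v = 1} with hB₂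
  have hB₁ne : B₁.Nonempty := by
    obtain ⟨v, hv, hv0⟩ := hC₁ne
    have hpos : 0 < e₁ v := he₁ v hv hv0
    refine ⟨(e₁ v)⁻¹ • v, C₁.smul_mem (by positivity) hv, ?_⟩
    simp [inv_mul_cancel₀ hpos.ne']
  have hB₂ne : B₂.Nonempty := by
    obtain ⟨v, hv, hv0⟩ := hC₂ne
    have hpos : 0 < e₂ v := he₂ v hv hv0
    refine ⟨(e₂ v)⁻¹ • v, C₂.smul_mem (by positivity) hv, ?_⟩
    simp [inv_mul_cancel₀ hpos.ne']
  have hpair : ∀ v₁ ∈ B₁, ∀ v₂ ∈ B₂, 0 ≤ g₁ v₁ + g₂ v₂ := by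
    intro v₁ h₁ v₂ h₂
    exact hg (v₁, v₂) ⟨h₁.1, h₂.1, by rw [h₁.2, h₂.2]⟩
  set S₁ : Set ℝ := g₁ '' B₁ with hS₁
  set S₂ : Set ℝ := g₂ '' B₂ with hS₂
  have hS₁ne : S₁.Nonempty := hB₁ne.image _
  have hS₂ne : S₂.Nonempty := hB₂ne.image _
  obtain ⟨w₂, hw₂⟩ := hB₂ne
  obtain ⟨w₁, hw₁⟩ := hB₁ne
  have hbd₁ : BddBelow S₁ := by
    refine ⟨-g₂ w₂, ?_⟩
    rintro x ⟨v, hv, rfl⟩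
    linarith [hpair v hv w₂ hw₂]
  have hbd₂ : BddBelow S₂ := by
    refine ⟨-g₁ w₁, ?_⟩
    rintro x ⟨v, hv, rfl⟩
    linarith [hpair w₁ hw₁ v hv]
  set m₁ : ℝ := sInf S₁ with hm₁
  set m₂ : ℝ := sInf S₂ with hm₂
  -- m₁ + m₂ ≥ 0
  have hmm : 0 ≤ m₁ + m₂ := by
    have h1 : -m₂ ≤ m₁ := by
      refine le_csInf hS₁ne ?_
      rintro x ⟨v, hv, rfl⟩
      have : -(g₁ v) ≤ m₂ := by
        refine le_csInf hS₂ne ?_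
        rintro y ⟨w, hw, rfl⟩
        linarith [hpair v hv w hw]
      linarith
    linarith
  -- shifted functionals are nonnegative on the cones
  have hf₁ : ∀ v ∈ C₁, 0 ≤ g₁ v - m₁ * e₁ v := by
    intro v hv
    rcases eq_or_ne v 0 with rfl | hv0
    · simp
    · have hpos : 0 < e₁ v := he₁ v hv hv0
      have hmem : (e₁ v)⁻¹ • v ∈ B₁ := by
        exact ⟨C₁.smul_mem (by positivity) hv, by simp [inv_mul_cancel₀ hpos.ne']⟩
      have h2 : m₁ ≤ g₁ ((e₁ v)⁻¹ • v) := csInf_le hbd₁ ⟨_, hmem, rfl⟩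
      rw [map_smul, smul_eq_mul] at h2
      have h3 := mul_le_mul_of_nonneg_left h2 hpos.le
      rw [← mul_assoc, mul_inv_cancel₀ hpos.ne', one_mul] at h3
      linarith
  have hf₂ : ∀ v ∈ C₂, 0 ≤ g₂ v - m₂ * e₂ v := by
    intro v hv
    rcases eq_or_ne v 0 with rfl | hv0
    · simp
    · have hpos : 0 < e₂ v := he₂ v hv hv0
      have hmem : (e₂ v)⁻¹ • v ∈ B₂ := by
        exact ⟨C₂.smul_mem (by positivity) hv, by simp [inv_mul_cancel₀ hpos.ne']⟩
      have h2 : m₂ ≤ g₂ ((e₂ v)⁻¹ • v) := csInf_le hbd₂ ⟨_, hmem, rfl⟩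
      rw [map_smul, smul_eq_mul] at h2
      have h3 := mul_le_mul_of_nonneg_left h2 hpos.le
      rw [← mul_assoc, mul_inv_cancel₀ hpos.ne', one_mul] at h3
      linarith
  have he₁' : ∀ v ∈ C₁, 0 ≤ e₁ v := by
    intro v hv
    rcases eq_or_ne v 0 with rfl | hv0
    · simp
    · exact (he₁ v hv hv0).le
  have he₂' : ∀ v ∈ C₂, 0 ≤ e₂ v := by
    intro v hv
    rcases eq_or_ne v 0 with rfl | hv0
    · simp
    · exact (he₂ v hv hv0).le
  set f₁ : Module.Dual ℝ V₁ := g₁ - m₁ • e₁ with hf₁def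
  set f₂ : Module.Dual ℝ V₂ := g₂ - m₂ • e₂ with hf₂def
  -- the key algebraic identity
  have key : ∀ Ξ : U ⊗[ℝ] (V₁ ⊗[ℝ] V₂),
      tensorDual α g₁ (Jmap U V₁ V₂ e₁ e₂ Ξ).1 +
        tensorDual α g₂ (Jmap U V₁ V₂ e₁ e₂ Ξ).2 =
      tensorDual α (tensorDual f₁ e₂) Ξ + tensorDual α (tensorDual e₁ f₂) Ξ +
        (m₁ + m₂) * tensorDual α (tensorDual e₁ e₂) Ξ := by
    intro Ξ
    induction Ξ using TensorProduct.induction_on with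
    | zero => simp
    | tmul u x =>
      induction x using TensorProduct.induction_on with
      | zero => simp
      | tmul v w =>
        simp [tensorDual, Jmap, ctrR, ctrL, hf₁def, hf₂def, TensorProduct.smul_tmul',
          LinearMap.sub_apply, LinearMap.smul_apply, smul_eq_mul]
        ring
      | add x y hx hy =>
        simp only [TensorProduct.tmul_add, map_add, Prod.fst_add, Prod.snd_add] at *
        linarith
    | add x y hx hy =>
      simp only [map_add, Prod.fst_add, Prod.snd_add] at *
      linarith
  rw [key Xi]
  -- each of the three terms is nonnegative
  have hfe : ∀ d ∈ (D : Set (V₁ ⊗[ℝ] V₂)), 0 ≤ tensorDual f₁ e₂ d := by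
    intro d hd
    refine hD hd f₁ e₂ ?_ he₂'
    intro v hv; simpa [hf₁def, smul_eq_mul] using hf₁ v hv
  have hef : ∀ d ∈ (D : Set (V₁ ⊗[ℝ] V₂)), 0 ≤ tensorDual e₁ f₂ d := by
    intro d hd
    refine hD hd e₁ f₂ he₁' ?_
    intro v hv; simpa [hf₂def, smul_eq_mul] using hf₂ v hv
  have hee : ∀ d ∈ (D : Set (V₁ ⊗[ℝ] V₂)), 0 ≤ tensorDual e₁ e₂ d := by
    intro d hd
    exact hD hd e₁ e₂ he₁' he₂'
  have t1 := hXi α (tensorDual f₁ e₂) hα hfe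
  have t2 := hXi α (tensorDual e₁ f₂) hα hef
  have t3 := hXi α (tensorDual e₁ e₂) hα hee
  have := mul_nonneg hmm t3
  linarith

end
end

section
/- Let n ≥ 1 and let Φ₁, Φ₂ : Matrix (Fin n) (Fin n) ℂ → Matrix (Fin n) (Fin n) ℂ be quantum channels. Then Φ₁ and Φ₂ are compatible if and only if for all Hermitian matrices A, B indexed by (Fin n × Fin n) (interpreted as output × input) such that Ã + 𝟙⊗B is positive semidefinite—where Ã and 𝟙⊗B are the matrices indexed by ((Fin n × Fin n) × Fin n) (two output factors × input) with entries Ã (((a,c),i),((b,d),j)) = A ((a,i),(b,j)) · δ_{c d} and (𝟙⊗B) (((a,c),i),((b,d),j)) = δ_{a b} · B ((c,i),(d,j))—one has Re Tr(C(Φ₁) · A) + Re Tr(C(Φ₂) · B) ≥ 0. -/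
open Matrix BigOperators
open scoped ComplexOrder

noncomputable section

/-- A density matrix: positive semidefinite with trace 1. -/
def IsDensity {ι : Type*} [Fintype ι] (M : Matrix ι ι ℂ) : Prop :=
  M.PosSemidef ∧ M.trace = 1

/-- The Choi matrix of a linear map between matrix spaces, indexed by (output × input). -/
def choi {ι κ : Type*} [Fintype ι] [DecidableEq ι]
    (Φ : Matrix ι ι ℂ →ₗ[ℂ] Matrix κ κ ℂ) : Matrix (κ × ι) (κ × ι) ℂ :=
  fun p q => Φ (Matrix.single p.2 q.2 1) p.1 q.1

/-- A quantum channel: trace preserving with positive semidefinite Choi matrix. -/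
def IsQChannel {ι κ : Type*} [Fintype ι] [DecidableEq ι] [Fintype κ]
    (Φ : Matrix ι ι ℂ →ₗ[ℂ] Matrix κ κ ℂ) : Prop :=
  (∀ X, (Φ X).trace = X.trace) ∧ (choi Φ).PosSemidef

/-- The tensor product `Φ ⊗ Ψ` of maps on matrix spaces, determined by
`(Φ ⊗ Ψ)(X ⊗ₖ Y) = (Φ X) ⊗ₖ (Ψ Y)`. -/
def tmap {α β γ δ : Type*} [Fintype α] [DecidableEq α] [Fintype γ] [DecidableEq γ]
    (Φ : Matrix α α ℂ → Matrix β β ℂ) (Ψ : Matrix γ γ ℂ → Matrix δ δ ℂ)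
    (M : Matrix (α × γ) (α × γ) ℂ) : Matrix (β × δ) (β × δ) ℂ :=
  fun p q => ∑ a, ∑ a', ∑ c, ∑ c', M (a, c) (a', c') *
    (Φ (Matrix.single a a' 1) p.1 q.1 * Ψ (Matrix.single c c' 1) p.2 q.2)

/-- Partial trace over the second factor of a bipartite matrix. -/
def ptr2 {α β : Type*} [Fintype β] (M : Matrix (α × β) (α × β) ℂ) : Matrix α α ℂ :=
  fun a a' => ∑ b, M (a, b) (a', b)

/-- Partial trace over the first factor of a bipartite matrix. -/
def ptr1 {α β : Type*} [Fintype α] (M : Matrix (α × β) (α × β) ℂ) : Matrix β β ℂ :=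
  fun b b' => ∑ a, M (a, b) (a, b')

/-- Compatibility of two quantum channels: they arise as the two marginals of a single
channel into the tensor product. -/
def Compatible {n : ℕ} (Φ₁ Φ₂ : Matrix (Fin n) (Fin n) ℂ →ₗ[ℂ] Matrix (Fin n) (Fin n) ℂ) : Prop :=
  ∃ Φ : Matrix (Fin n) (Fin n) ℂ →ₗ[ℂ] Matrix (Fin n × Fin n) (Fin n × Fin n) ℂ,
    IsQChannel Φ ∧ ∀ ρ : Matrix (Fin n) (Fin n) ℂ, IsDensity ρ →
      ptr2 (Φ ρ) = Φ₁ ρ ∧ ptr1 (Φ ρ) = Φ₂ ρ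

/-- The lift `Ã` of a matrix `A` indexed by (output × input) to a matrix indexed by
((output₁ × output₂) × input), acting as `A` on the first output factor and input,
and as the identity on the second output factor. -/
def atilde {n : ℕ} (A : Matrix (Fin n × Fin n) (Fin n × Fin n) ℂ) :
    Matrix ((Fin n × Fin n) × Fin n) ((Fin n × Fin n) × Fin n) ℂ :=
  fun p q => A (p.1.1, p.2) (q.1.1, q.2) * (if p.1.2 = q.1.2 then 1 else 0)

/-- The lift `𝟙 ⊗ B` of a matrix `B` indexed by (output × input) to a matrix indexed by
((output₁ × output₂) × input), acting as the identity on the first output factor and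
as `B` on the second output factor and input. -/
def oneTensor {n : ℕ} (B : Matrix (Fin n × Fin n) (Fin n × Fin n) ℂ) :
    Matrix ((Fin n × Fin n) × Fin n) ((Fin n × Fin n) × Fin n) ℂ :=
  fun p q => (if p.1.1 = q.1.1 then 1 else 0) * B (p.1.2, p.2) (q.1.2, q.2)

/-!
Compatibility is a statement about Choi matrices: `Φ₁` and `Φ₂` are compatible exactly when
`(C(Φ₁), C(Φ₂))` is the pair of marginals of some positive semidefinite matrix on
output₁ × output₂ × input. These marginal pairs form a convex cone, which is closed because a
positive semidefinite matrix is bounded by its trace and marginals preserve the trace. By Farkas'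
lemma a point lies in a closed convex cone iff every linear functional that is nonnegative on the
cone is nonnegative at the point. Writing functionals as `X ↦ Re Tr(X A)`, the functional attached
to `(A, B)` is nonnegative on the cone iff `Ã + 𝟙⊗B` is positive semidefinite, since
`Tr(C Ã) = Tr(Tr₂(C) A)`, `Tr(C (𝟙⊗B)) = Tr(Tr₁(C) B)` and the positive semidefinite cone is
self-dual.
-/

namespace Matrix

variable {ι : Type*}

theorem PosSemidef.norm_apply_sq_le {C : Matrix ι ι ℂ} (hC : C.PosSemidef) (p q : ι) :
    ‖C p q‖ ^ 2 ≤ (C p p).re * (C q q).re := by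
  have hdet := (hC.submatrix ![p, q]).det_nonneg
  have hqp : C q p = star (C p q) := by simpa using (congrFun₂ hC.1 q p).symm
  simp only [det_fin_two, submatrix_apply, cons_val_zero, cons_val_one, sub_nonneg, hqp,
    Complex.star_def, Complex.mul_conj', Complex.le_def] at hdet
  have hp := (Complex.nonneg_iff.mp (hC.diag_nonneg (i := p))).2
  have hq := (Complex.nonneg_iff.mp (hC.diag_nonneg (i := q))).2
  simpa [← hp, ← hq, ← Complex.ofReal_pow] using hdet.1

variable [Fintype ι]

theorem trace_vecMulVec_star_mul (x : ι → ℂ) (M : Matrix ι ι ℂ) :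
    (vecMulVec x (star x) * M).trace = star x ⬝ᵥ M *ᵥ x := by
  rw [vecMulVec_mul, trace_vecMulVec, dotProduct_comm, dotProduct_mulVec]

theorem PosSemidef.trace_mul_nonneg {A B : Matrix ι ι ℂ} (hA : A.PosSemidef)
    (hB : B.PosSemidef) : 0 ≤ (A * B).trace := by
  obtain ⟨m, v, rfl⟩ := posSemidef_iff_eq_sum_vecMulVec.mp hA
  rw [Finset.sum_mul, trace_sum]
  exact Finset.sum_nonneg fun i _ =>
    trace_vecMulVec_star_mul (v i) B ▸ hB.dotProduct_mulVec_nonneg _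

theorem posSemidef_iff_forall_re_trace_mul_nonneg {M : Matrix ι ι ℂ} (hM : M.IsHermitian) :
    M.PosSemidef ↔ ∀ C : Matrix ι ι ℂ, C.PosSemidef → 0 ≤ (C * M).trace.re := by
  refine ⟨fun h C hC => (Complex.nonneg_iff.mp (hC.trace_mul_nonneg h)).1, fun h => ?_⟩
  refine .of_dotProduct_mulVec_nonneg hM fun x => Complex.nonneg_iff.mpr ⟨?_, ?_⟩
  · simpa [trace_vecMulVec_star_mul] using h _ (posSemidef_vecMulVec_self_star x)
  · exact (hM.im_star_dotProduct_mulVec_self x).symm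

theorem PosSemidef.re_apply_self_le_re_trace {C : Matrix ι ι ℂ} (hC : C.PosSemidef) (p : ι) :
    (C p p).re ≤ C.trace.re := by
  rw [trace, Complex.re_sum]
  exact Finset.single_le_sum (f := fun r => (C r r).re)
    (fun r _ => (Complex.nonneg_iff.mp hC.diag_nonneg).1) (Finset.mem_univ p)

theorem PosSemidef.norm_apply_le_re_trace {C : Matrix ι ι ℂ} (hC : C.PosSemidef) (p q : ι) :
    ‖C p q‖ ≤ C.trace.re := by
  have hp := (Complex.nonneg_iff.mp (hC.diag_nonneg (i := p))).1
  have hq := (Complex.nonneg_iff.mp (hC.diag_nonneg (i := q))).1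
  have hpt := hC.re_apply_self_le_re_trace p
  refine (pow_le_pow_iff_left₀ (norm_nonneg _) (hp.trans hpt) two_ne_zero).mp
    ((hC.norm_apply_sq_le p q).trans ?_)
  rw [sq]
  exact mul_le_mul hpt (hC.re_apply_self_le_re_trace q) hq (hp.trans hpt)

theorem isClosed_setOf_posSemidef : IsClosed {C : Matrix ι ι ℂ | C.PosSemidef} := by
  simp only [posSemidef_iff_dotProduct_mulVec, Set.ofPred_and, Set.ofPred_forall]
  refine (isClosed_eq continuous_id.matrix_conjTranspose continuous_id).inter
    (isClosed_iInter fun x => isClosed_le continuous_const ?_)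
  fun_prop

theorem isCompact_setOf_posSemidef_re_trace_le (R : ℝ) :
    IsCompact {C : Matrix ι ι ℂ | C.PosSemidef ∧ C.trace.re ≤ R} := by
  refine (isCompact_univ_pi fun _ => isCompact_univ_pi fun _ =>
    isCompact_closedBall (0 : ℂ) R).of_isClosed_subset ?_ ?_
  · exact isClosed_setOf_posSemidef.inter
      (isClosed_le (Complex.continuous_re.comp continuous_id.matrix_trace) continuous_const)
  · rintro C ⟨hC, hR⟩ p - q -
    simpa using (hC.norm_apply_le_re_trace p q).trans hR

instance instLocallyConvexSpace {m n : Type*} [Fintype m] [Fintype n] :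
    LocallyConvexSpace ℝ (Matrix m n ℂ) :=
  inferInstanceAs (LocallyConvexSpace ℝ (m → n → ℂ))

theorem exists_re_trace_mul_eq (g : Matrix ι ι ℂ →ₗ[ℝ] ℝ) :
    ∃ M : Matrix ι ι ℂ, ∀ X, (X * M).trace.re = g X := by
  let T : Matrix ι ι ℂ →ₗ[ℝ] Module.Dual ℝ (Matrix ι ι ℂ) :=
    LinearMap.mk₂ ℝ (fun M X => (X * M).trace.re)
      (fun M M' X => by simp [mul_add, trace_add])
      (fun c M X => by simp [trace_smul])
      (fun M X X' => by simp [add_mul, trace_add])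
      (fun c M X => by simp [trace_smul])
  -- `T` is injective because `Re Tr(Mᴴ M)` is the squared Frobenius norm of `M`.
  have hT : Function.Injective T := by
    refine (injective_iff_map_eq_zero T).mpr fun M hM => ?_
    have hre : (Mᴴ * M).trace.re = 0 := LinearMap.congr_fun hM Mᴴ
    have him := (Complex.nonneg_iff.mp (posSemidef_conjTranspose_mul_self M).trace_nonneg).2
    exact trace_conjTranspose_mul_self_eq_zero_iff.mp (Complex.ext hre him.symm)
  obtain ⟨M, hM⟩ := (LinearMap.injective_iff_surjective_of_finrank_eq_finrank
    Subspace.dual_finrank_eq.symm).mp hT g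
  exact ⟨M, fun X => LinearMap.congr_fun hM X⟩

theorem exists_isHermitian_re_trace_mul_eq (g : Matrix ι ι ℂ →ₗ[ℝ] ℝ) :
    ∃ A : Matrix ι ι ℂ, A.IsHermitian ∧ ∀ X, X.IsHermitian → (X * A).trace.re = g X := by
  obtain ⟨M, hM⟩ := exists_re_trace_mul_eq g
  refine ⟨realPart M, (realPart M).2.isHermitian, fun X hX => ?_⟩
  have hstar : (X * star M).trace = star (X * M).trace := by
    rw [star_eq_conjTranspose, ← trace_conjTranspose, conjTranspose_mul, hX.eq, trace_mul_comm]
  rw [realPart_apply_coe, mul_smul_comm, trace_smul, mul_add, trace_add, hstar]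
  simp [hM]
  ring

variable [DecidableEq ι]

theorem single_mem_span_posSemidef (i j : ι) :
    single i j (1 : ℂ) ∈ Submodule.span ℂ {M : Matrix ι ι ℂ | M.PosSemidef} := by
  set u : ι → ℂ := Pi.single i 1 + Pi.single j 1
  set w : ι → ℂ := Pi.single i 1 + Complex.I • Pi.single j 1
  have hcomb : vecMulVec u (star u) + Complex.I • vecMulVec w (star w) =
      (2 : ℂ) • single i j 1 + (1 + Complex.I) • (single i i 1 + single j j 1) := by
    ext a b
    simp only [u, w, add_apply, smul_apply, vecMulVec_apply, Pi.add_apply, Pi.star_apply,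
      Pi.smul_apply, Pi.single_apply, single_apply, smul_eq_mul, eq_comm (a := i) (b := a),
      eq_comm (a := j) (b := a), eq_comm (a := i) (b := b), eq_comm (a := j) (b := b)]
    by_cases hai : a = i <;> by_cases haj : a = j <;> by_cases hbi : b = i <;>
      by_cases hbj : b = j <;> simp_all [Complex.ext_iff] <;> norm_num
  have hsingle : single i j (1 : ℂ) = (2 : ℂ)⁻¹ • (vecMulVec u (star u) +
      Complex.I • vecMulVec w (star w) - (1 + Complex.I) • (single i i 1 + single j j 1)) := by
    rw [hcomb, add_sub_cancel_right, smul_smul, inv_mul_cancel₀ two_ne_zero, one_smul]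
  have hdiag (k : ι) : single k k (1 : ℂ) = vecMulVec (Pi.single k 1) (star (Pi.single k 1)) := by
    ext a b
    by_cases hka : k = a <;> by_cases hkb : k = b <;>
      simp [vecMulVec_apply, Pi.single_apply, single_apply, eq_comm, hka, hkb]
  have hmem (v : ι → ℂ) :
      vecMulVec v (star v) ∈ Submodule.span ℂ {M : Matrix ι ι ℂ | M.PosSemidef} :=
    Submodule.subset_span (posSemidef_vecMulVec_self_star v)
  rw [hsingle, hdiag i, hdiag j]
  apply_rules [Submodule.smul_mem, Submodule.add_mem, Submodule.sub_mem]

theorem span_posSemidef_eq_top : Submodule.span ℂ {M : Matrix ι ι ℂ | M.PosSemidef} = ⊤ := by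
  refine eq_top_iff.mpr fun X _ => ?_
  rw [matrix_eq_sum_single X]
  refine Submodule.sum_mem _ fun i _ => Submodule.sum_mem _ fun j _ => ?_
  rw [← mul_one (X i j), ← smul_eq_mul, ← smul_single]
  exact Submodule.smul_mem _ _ (single_mem_span_posSemidef i j)

end Matrix

section Density

variable {ι : Type*} [Fintype ι]

theorem Matrix.PosSemidef.mem_span_isDensity {M : Matrix ι ι ℂ} (hM : M.PosSemidef) :
    M ∈ Submodule.span ℂ {ρ : Matrix ι ι ℂ | IsDensity ρ} := by
  by_cases h0 : M.trace = 0
  · rw [hM.trace_eq_zero_iff.mp h0]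
    exact Submodule.zero_mem _
  have hpos : 0 < M.trace := lt_of_le_of_ne hM.trace_nonneg (Ne.symm h0)
  have hρ : IsDensity (M.trace⁻¹ • M) :=
    ⟨hM.smul (RCLike.inv_pos.mpr hpos).le, by rw [trace_smul, smul_eq_mul, inv_mul_cancel₀ h0]⟩
  rw [← smul_inv_smul₀ h0 M]
  exact Submodule.smul_mem _ _ (Submodule.subset_span hρ)

variable [DecidableEq ι]

theorem span_isDensity_eq_top : Submodule.span ℂ {ρ : Matrix ι ι ℂ | IsDensity ρ} = ⊤ :=
  eq_top_iff.mpr <| Matrix.span_posSemidef_eq_top.ge.trans <|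
    Submodule.span_le.mpr fun _ hM => hM.mem_span_isDensity

theorem LinearMap.ext_of_isDensity {V : Type*} [AddCommMonoid V] [Module ℂ V]
    {F G : Matrix ι ι ℂ →ₗ[ℂ] V} (h : ∀ ρ, IsDensity ρ → F ρ = G ρ) : F = G :=
  LinearMap.ext_on span_isDensity_eq_top h

end Density

section Choi

variable {ι κ : Type*} [Fintype ι] [DecidableEq ι]

def ofChoi (C : Matrix (κ × ι) (κ × ι) ℂ) : Matrix ι ι ℂ →ₗ[ℂ] Matrix κ κ ℂ where
  toFun X := of fun p q => ∑ i, ∑ j, X i j * C (p, i) (q, j)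
  map_add' X Y := by ext p q; simp [add_mul, Finset.sum_add_distrib]
  map_smul' c X := by ext p q; simp [Finset.mul_sum, mul_assoc]

theorem choi_ofChoi (C : Matrix (κ × ι) (κ × ι) ℂ) : choi (ofChoi C) = C := by
  ext ⟨a, i⟩ ⟨b, j⟩
  simp [choi, ofChoi, single_apply, ite_and]

theorem choi_injective : Function.Injective (choi : (Matrix ι ι ℂ →ₗ[ℂ] Matrix κ κ ℂ) → _) :=
  fun _ _ h => Matrix.ext_linearMap ℂ fun i j => LinearMap.ext_ring <| Matrix.ext fun a b =>
    congrFun₂ h (a, i) (b, j)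

end Choi

section PartialTrace
variable {α β ι : Type*}

def ptr2ₗ [Fintype β] : Matrix (α × β) (α × β) ℂ →ₗ[ℂ] Matrix α α ℂ where
  toFun := ptr2
  map_add' M N := by ext a a'; simp [ptr2, Finset.sum_add_distrib]
  map_smul' c M := by ext a a'; simp [ptr2, Finset.mul_sum]

def ptr1ₗ [Fintype α] : Matrix (α × β) (α × β) ℂ →ₗ[ℂ] Matrix β β ℂ where
  toFun := ptr1
  map_add' M N := by ext b b'; simp [ptr1, Finset.sum_add_distrib]
  map_smul' c M := by ext b b'; simp [ptr1, Finset.mul_sum]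

theorem trace_ptr2 [Fintype α] [Fintype β] (M : Matrix (α × β) (α × β) ℂ) :
    (ptr2 M).trace = M.trace := by
  simp [trace, ptr2, Fintype.sum_prod_type]

def choiPtr2 [Fintype β] :
    Matrix ((α × β) × ι) ((α × β) × ι) ℂ →ₗ[ℂ] Matrix (α × ι) (α × ι) ℂ where
  toFun C := of fun p q => ∑ b, C ((p.1, b), p.2) ((q.1, b), q.2)
  map_add' C D := by ext p q; simp [Finset.sum_add_distrib]
  map_smul' c C := by ext p q; simp [Finset.mul_sum]

def choiPtr1 [Fintype α] :
    Matrix ((α × β) × ι) ((α × β) × ι) ℂ →ₗ[ℂ] Matrix (β × ι) (β × ι) ℂ where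
  toFun C := of fun p q => ∑ a, C ((a, p.1), p.2) ((a, q.1), q.2)
  map_add' C D := by ext p q; simp [Finset.sum_add_distrib]
  map_smul' c C := by ext p q; simp [Finset.mul_sum]

theorem choi_ptr2ₗ_comp [Fintype β] [Fintype ι] [DecidableEq ι]
    (Φ : Matrix ι ι ℂ →ₗ[ℂ] Matrix (α × β) (α × β) ℂ) :
    choi (ptr2ₗ ∘ₗ Φ) = choiPtr2 (choi Φ) := rfl

theorem choi_ptr1ₗ_comp [Fintype α] [Fintype ι] [DecidableEq ι]
    (Φ : Matrix ι ι ℂ →ₗ[ℂ] Matrix (α × β) (α × β) ℂ) :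
    choi (ptr1ₗ ∘ₗ Φ) = choiPtr1 (choi Φ) := rfl

theorem trace_choiPtr2 [Fintype α] [Fintype β] [Fintype ι]
    (C : Matrix ((α × β) × ι) ((α × β) × ι) ℂ) : (choiPtr2 C).trace = C.trace := by
  simp only [trace, diag, choiPtr2, LinearMap.coe_mk, AddHom.coe_mk, of_apply,
    Fintype.sum_prod_type]
  exact Finset.sum_congr rfl fun _ _ => Finset.sum_comm

theorem isHermitian_choiPtr2 [Fintype β] {C : Matrix ((α × β) × ι) ((α × β) × ι) ℂ}
    (hC : C.IsHermitian) : (choiPtr2 C).IsHermitian := by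
  ext p q
  simp only [conjTranspose_apply, choiPtr2, LinearMap.coe_mk, AddHom.coe_mk, of_apply, star_sum,
    hC.apply]

theorem isHermitian_choiPtr1 [Fintype α] {C : Matrix ((α × β) × ι) ((α × β) × ι) ℂ}
    (hC : C.IsHermitian) : (choiPtr1 C).IsHermitian := by
  ext p q
  simp only [conjTranspose_apply, choiPtr1, LinearMap.coe_mk, AddHom.coe_mk, of_apply, star_sum,
    hC.apply]

end PartialTrace

section MarginalCone
variable (α β ι : Type*) [Fintype α] [Fintype β] [Fintype ι]

def posSemidefCone : PointedCone ℝ (Matrix ι ι ℂ) where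
  carrier := {C | C.PosSemidef}
  add_mem' := PosSemidef.add
  zero_mem' := PosSemidef.zero
  smul_mem' c _ hC := hC.smul c.2

def choiMarginals : Matrix ((α × β) × ι) ((α × β) × ι) ℂ →ₗ[ℝ]
    Matrix (α × ι) (α × ι) ℂ × Matrix (β × ι) (β × ι) ℂ :=
  (choiPtr2.restrictScalars ℝ).prod (choiPtr1.restrictScalars ℝ)

theorem isClosed_marginalCone :
    IsClosed ((posSemidefCone _).map (choiMarginals α β ι) :
      Set (Matrix (α × ι) (α × ι) ℂ × Matrix (β × ι) (β × ι) ℂ)) := by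
  -- Near `X` the cone only sees marginals of matrices of trace `≤ R`, a compact set.
  refine closure_subset_iff_isClosed.mp fun X hX => ?_
  set R := X.1.trace.re + 1
  have hL : Continuous (choiMarginals α β ι) := LinearMap.continuous_of_finiteDimensional _
  have hK := (isCompact_setOf_posSemidef_re_trace_le R).image hL
  have hU : IsOpen {Y : Matrix (α × ι) (α × ι) ℂ × Matrix (β × ι) (β × ι) ℂ | Y.1.trace.re < R} :=
    isOpen_lt (Complex.continuous_re.comp (continuous_id.matrix_trace.comp continuous_fst))
      continuous_const
  have hsub : {Y | Y.1.trace.re < R} ∩ ((posSemidefCone _).map (choiMarginals α β ι) : Set _) ⊆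
      choiMarginals α β ι '' {C | C.PosSemidef ∧ C.trace.re ≤ R} := by
    rintro Y ⟨hY, C, hC, hCY⟩
    refine ⟨C, ⟨hC, ?_⟩, hCY⟩
    rw [← trace_choiPtr2 (β := β)]
    exact (congrArg (fun Y => Y.1.trace.re) hCY).trans_lt hY |>.le
  obtain ⟨C, ⟨hC, -⟩, rfl⟩ := hK.isClosed.closure_subset_iff.mpr hsub
    (hU.inter_closure ⟨show X.1.trace.re < R from lt_add_one _, hX⟩)
  exact ⟨C, hC, rfl⟩

def marginalCone : ProperCone ℝ (Matrix (α × ι) (α × ι) ℂ × Matrix (β × ι) (β × ι) ℂ) where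
  toSubmodule := (posSemidefCone _).map (choiMarginals α β ι)
  isClosed' := isClosed_marginalCone α β ι

variable {α β ι}

theorem mem_marginalCone {X : Matrix (α × ι) (α × ι) ℂ × Matrix (β × ι) (β × ι) ℂ} :
    X ∈ marginalCone α β ι ↔ ∃ C, C.PosSemidef ∧ choiPtr2 C = X.1 ∧ choiPtr1 C = X.2 := by
  simp [marginalCone, choiMarginals, posSemidefCone, Prod.ext_iff]

end MarginalCone

section Separation
variable {α β ι : Type*} [Fintype α] [Fintype β] [Fintype ι]

theorem exists_separating_of_notMem_marginalCone {X₁ : Matrix (α × ι) (α × ι) ℂ}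
    {X₂ : Matrix (β × ι) (β × ι) ℂ} (hX₁ : X₁.IsHermitian) (hX₂ : X₂.IsHermitian)
    (hX : (X₁, X₂) ∉ marginalCone α β ι) :
    ∃ A B, A.IsHermitian ∧ B.IsHermitian ∧
      (∀ C : Matrix ((α × β) × ι) ((α × β) × ι) ℂ, C.PosSemidef →
        0 ≤ (choiPtr2 C * A).trace.re + (choiPtr1 C * B).trace.re) ∧
      (X₁ * A).trace.re + (X₂ * B).trace.re < 0 := by
  obtain ⟨f, hf, hfX⟩ := (marginalCone α β ι).hyperplane_separation_point hX
  obtain ⟨A, hA, hfA⟩ := exists_isHermitian_re_trace_mul_eq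
    (f.comp (ContinuousLinearMap.inl ℝ _ _)).toLinearMap
  obtain ⟨B, hB, hfB⟩ := exists_isHermitian_re_trace_mul_eq
    (f.comp (ContinuousLinearMap.inr ℝ _ _)).toLinearMap
  have hfAB (Y₁ : Matrix (α × ι) (α × ι) ℂ) (Y₂ : Matrix (β × ι) (β × ι) ℂ)
      (hY₁ : Y₁.IsHermitian) (hY₂ : Y₂.IsHermitian) :
      (Y₁ * A).trace.re + (Y₂ * B).trace.re = f (Y₁, Y₂) := by
    rw [hfA _ hY₁, hfB _ hY₂]
    exact f.comp_inl_add_comp_inr (Y₁, Y₂)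
  refine ⟨A, B, hA, hB, fun C hC => ?_, hfAB _ _ hX₁ hX₂ ▸ hfX⟩
  rw [hfAB _ _ (isHermitian_choiPtr2 hC.1) (isHermitian_choiPtr1 hC.1)]
  exact hf _ (mem_marginalCone.mpr ⟨C, hC, rfl, rfl⟩)

theorem mem_marginalCone_iff {X₁ : Matrix (α × ι) (α × ι) ℂ} {X₂ : Matrix (β × ι) (β × ι) ℂ}
    (hX₁ : X₁.IsHermitian) (hX₂ : X₂.IsHermitian) :
    (X₁, X₂) ∈ marginalCone α β ι ↔
      ∀ A B, A.IsHermitian → B.IsHermitian →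
        (∀ C : Matrix ((α × β) × ι) ((α × β) × ι) ℂ, C.PosSemidef →
          0 ≤ (choiPtr2 C * A).trace.re + (choiPtr1 C * B).trace.re) →
        0 ≤ (X₁ * A).trace.re + (X₂ * B).trace.re := by
  refine ⟨fun hX A B _ _ h => ?_, fun h => by_contra fun hX => ?_⟩
  · obtain ⟨C, hC, rfl, rfl⟩ := mem_marginalCone.mp hX
    exact h C hC
  · obtain ⟨A, B, hA, hB, hAB, hlt⟩ := exists_separating_of_notMem_marginalCone hX₁ hX₂ hX
    exact (h A B hA hB hAB).not_gt hlt

end Separation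

section Compatibility
variable {n : ℕ}

theorem trace_mul_atilde (C : Matrix ((Fin n × Fin n) × Fin n) ((Fin n × Fin n) × Fin n) ℂ)
    (A : Matrix (Fin n × Fin n) (Fin n × Fin n) ℂ) :
    (C * atilde A).trace = (choiPtr2 C * A).trace := by
  simp only [trace, diag, mul_apply, atilde, choiPtr2, LinearMap.coe_mk, AddHom.coe_mk, of_apply,
    Fintype.sum_prod_type, mul_ite, mul_one, mul_zero, Finset.sum_ite_irrel, Finset.sum_const_zero,
    Finset.sum_ite_eq', Finset.mem_univ, if_true, Finset.sum_mul]
  refine Finset.sum_congr rfl fun a _ => ?_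
  rw [Finset.sum_comm]
  refine Finset.sum_congr rfl fun i _ => ?_
  rw [Finset.sum_comm]
  exact Finset.sum_congr rfl fun b _ => Finset.sum_comm

theorem trace_mul_oneTensor (C : Matrix ((Fin n × Fin n) × Fin n) ((Fin n × Fin n) × Fin n) ℂ)
    (B : Matrix (Fin n × Fin n) (Fin n × Fin n) ℂ) :
    (C * oneTensor B).trace = (choiPtr1 C * B).trace := by
  simp only [trace, diag, mul_apply, oneTensor, choiPtr1, LinearMap.coe_mk, AddHom.coe_mk, of_apply,
    Fintype.sum_prod_type, ite_mul, one_mul, zero_mul, mul_ite, mul_zero, Finset.sum_ite_irrel,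
    Finset.sum_const_zero, Finset.sum_ite_eq', Finset.mem_univ, if_true, Finset.sum_mul]
  rw [Finset.sum_comm]
  refine Finset.sum_congr rfl fun c _ => ?_
  rw [Finset.sum_comm]
  refine Finset.sum_congr rfl fun i _ => ?_
  rw [Finset.sum_comm]
  exact Finset.sum_congr rfl fun d _ => Finset.sum_comm

theorem isHermitian_atilde {A : Matrix (Fin n × Fin n) (Fin n × Fin n) ℂ} (hA : A.IsHermitian) :
    (atilde A).IsHermitian := by
  ext p q
  simp only [conjTranspose_apply, atilde, star_mul', hA.apply, apply_ite star, star_one, star_zero,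
    eq_comm (a := q.1.2) (b := p.1.2)]

theorem isHermitian_oneTensor {B : Matrix (Fin n × Fin n) (Fin n × Fin n) ℂ} (hB : B.IsHermitian) :
    (oneTensor B).IsHermitian := by
  ext p q
  simp only [conjTranspose_apply, oneTensor, star_mul', hB.apply, apply_ite star, star_one,
    star_zero, eq_comm (a := q.1.1) (b := p.1.1)]

theorem compatible_iff_mem_marginalCone
    {Φ₁ Φ₂ : Matrix (Fin n) (Fin n) ℂ →ₗ[ℂ] Matrix (Fin n) (Fin n) ℂ}
    (hΦ₁ : ∀ X, (Φ₁ X).trace = X.trace) :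
    Compatible Φ₁ Φ₂ ↔ (choi Φ₁, choi Φ₂) ∈ marginalCone (Fin n) (Fin n) (Fin n) := by
  rw [mem_marginalCone]
  constructor
  · rintro ⟨Φ, hΦ, hmarg⟩
    refine ⟨choi Φ, hΦ.2, ?_, ?_⟩
    · rw [← choi_ptr2ₗ_comp, LinearMap.ext_of_isDensity (F := ptr2ₗ ∘ₗ Φ) (G := Φ₁)
        fun ρ hρ => (hmarg ρ hρ).1]
    · rw [← choi_ptr1ₗ_comp, LinearMap.ext_of_isDensity (F := ptr1ₗ ∘ₗ Φ) (G := Φ₂)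
        fun ρ hρ => (hmarg ρ hρ).2]
  · rintro ⟨C, hC, hC₁, hC₂⟩
    have h₁ : ptr2ₗ ∘ₗ ofChoi C = Φ₁ := choi_injective (by rw [choi_ptr2ₗ_comp, choi_ofChoi, hC₁])
    have h₂ : ptr1ₗ ∘ₗ ofChoi C = Φ₂ := choi_injective (by rw [choi_ptr1ₗ_comp, choi_ofChoi, hC₂])
    refine ⟨ofChoi C, ⟨fun X => ?_, (choi_ofChoi C).symm ▸ hC⟩, fun ρ _ =>
      ⟨LinearMap.congr_fun h₁ ρ, LinearMap.congr_fun h₂ ρ⟩⟩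
    rw [← trace_ptr2, ← hΦ₁ X, ← h₁]
    rfl

end Compatibility

theorem compatible_iff_dual_general {n : ℕ}
    (Φ₁ Φ₂ : Matrix (Fin n) (Fin n) ℂ →ₗ[ℂ] Matrix (Fin n) (Fin n) ℂ)
    (hΦ₁ : IsQChannel Φ₁) (hΦ₂ : IsQChannel Φ₂) :
    Compatible Φ₁ Φ₂ ↔
      ∀ A B : Matrix (Fin n × Fin n) (Fin n × Fin n) ℂ,
        A.IsHermitian → B.IsHermitian → (atilde A + oneTensor B).PosSemidef →
          0 ≤ ((choi Φ₁ * A).trace.re + (choi Φ₂ * B).trace.re) := by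
  rw [compatible_iff_mem_marginalCone hΦ₁.1, mem_marginalCone_iff hΦ₁.2.1 hΦ₂.2.1]
  refine forall₄_congr fun A B hA hB => imp_congr_left ?_
  rw [posSemidef_iff_forall_re_trace_mul_nonneg
    ((isHermitian_atilde hA).add (isHermitian_oneTensor hB))]
  simp only [mul_add, trace_add, Complex.add_re, trace_mul_atilde, trace_mul_oneTensor]

/-- two quantum channels are compatible iff for all Hermitian `A`, `B` with
`Ã + 𝟙⊗B` positive semidefinite, `Re Tr(C(Φ₁)A) + Re Tr(C(Φ₂)B) ≥ 0`. -/
theorem compatible_iff_dual {n : ℕ} (hn : 1 ≤ n)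
    (Φ₁ Φ₂ : Matrix (Fin n) (Fin n) ℂ →ₗ[ℂ] Matrix (Fin n) (Fin n) ℂ)
    (hΦ₁ : IsQChannel Φ₁) (hΦ₂ : IsQChannel Φ₂) :
    Compatible Φ₁ Φ₂ ↔
      ∀ A B : Matrix (Fin n × Fin n) (Fin n × Fin n) ℂ,
        A.IsHermitian → B.IsHermitian → (atilde A + oneTensor B).PosSemidef →
          0 ≤ ((choi Φ₁ * A).trace.re + (choi Φ₂ * B).trace.re) :=
  compatible_iff_dual_general Φ₁ Φ₂ hΦ₁ hΦ₂

end
end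

section
/- Let n ≥ 1, let ρ be a density matrix indexed by Fin n × Fin n, let U, V be n × n unitary matrices, and let Φ_U(X) = U X U* and Φ_V(X) = V X V* be the associated unitary channels. Then there exists a density matrix σ indexed by Fin n × Fin n × Fin n with Tr₃ σ = (id ⊗ Φ_U)(ρ) and Tr₂ σ = (id ⊗ Φ_V)(ρ) if and only if there exists a density matrix σ' indexed by Fin n × Fin n × Fin n with Tr₃ σ' = ρ and Tr₂ σ' = ρ; i.e., ρ is steerable by the unitary channels Φ_U, Φ_V if and only if it is steerable by two copies of the identity channel. -/
open Matrix BigOperators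
open scoped ComplexOrder

noncomputable section

/-- Partial trace over the third factor of a tripartite matrix. -/
def ptrace3 {α β γ : Type*} [Fintype γ] (M : Matrix (α × β × γ) (α × β × γ) ℂ) :
    Matrix (α × β) (α × β) ℂ :=
  fun p q => ∑ c, M (p.1, p.2, c) (q.1, q.2, c)

/-- Partial trace over the second factor of a tripartite matrix. -/
def ptrace2 {α β γ : Type*} [Fintype β] (M : Matrix (α × β × γ) (α × β × γ) ℂ) :
    Matrix (α × γ) (α × γ) ℂ :=
  fun p q => ∑ b, M (p.1, b, p.2) (q.1, b, q.2)


/-!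
Since `(id ⊗ Φ_U)(ρ) = (1 ⊗ U) ρ (1 ⊗ U)ᴴ`, both sides ask for a common tripartite extension of
two bipartite states. Conjugating an extension `σ` by the unitary `1 ⊗ U ⊗ V` conjugates its two
marginals by `1 ⊗ U` and `1 ⊗ V`: in each partial trace, the unitary on the traced-out factor
cycles around the trace and cancels against its adjoint. Conjugating by `1 ⊗ Uᴴ ⊗ Vᴴ` undoes this.
-/

open Kronecker

section PartialTrace

variable {α β γ : Type*} [Fintype α] [Fintype β] [Fintype γ]

theorem ptrace3_kronecker_mul [DecidableEq γ] (X : Matrix α α ℂ) (A : Matrix β β ℂ)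
    (M : Matrix (α × β × γ) (α × β × γ) ℂ) :
    ptrace3 ((X ⊗ₖ (A ⊗ₖ (1 : Matrix γ γ ℂ))) * M) = (X ⊗ₖ A) * ptrace3 M := by
  ext ⟨a, b⟩ ⟨a', b'⟩
  simp only [ptrace3, mul_apply, kroneckerMap_apply, one_apply, mul_ite, mul_one, mul_zero,
    ite_mul, zero_mul, Fintype.sum_prod_type, Finset.sum_ite_eq, Finset.mem_univ, ↓reduceIte,
    Finset.mul_sum]
  rw [Finset.sum_comm]
  exact Finset.sum_congr rfl fun _ _ => Finset.sum_comm

theorem ptrace3_mul_kronecker [DecidableEq γ] (X : Matrix α α ℂ) (A : Matrix β β ℂ)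
    (M : Matrix (α × β × γ) (α × β × γ) ℂ) :
    ptrace3 (M * (X ⊗ₖ (A ⊗ₖ (1 : Matrix γ γ ℂ)))) = ptrace3 M * (X ⊗ₖ A) := by
  ext ⟨a, b⟩ ⟨a', b'⟩
  simp only [ptrace3, mul_apply, kroneckerMap_apply, one_apply, mul_ite, mul_one, mul_zero,
    Fintype.sum_prod_type, Finset.sum_ite_eq', Finset.mem_univ, ↓reduceIte, Finset.sum_mul]
  rw [Finset.sum_comm]
  exact Finset.sum_congr rfl fun _ _ => Finset.sum_comm

theorem ptrace3_one_kronecker_mul_comm [DecidableEq α] [DecidableEq β] (B : Matrix γ γ ℂ)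
    (M : Matrix (α × β × γ) (α × β × γ) ℂ) :
    ptrace3 (((1 : Matrix α α ℂ) ⊗ₖ ((1 : Matrix β β ℂ) ⊗ₖ B)) * M) =
      ptrace3 (M * ((1 : Matrix α α ℂ) ⊗ₖ ((1 : Matrix β β ℂ) ⊗ₖ B))) := by
  ext ⟨a, b⟩ ⟨a', b'⟩
  simp only [ptrace3, mul_apply, kroneckerMap_apply, one_apply, ite_mul, one_mul, zero_mul,
    mul_ite, mul_zero, Fintype.sum_prod_type, Finset.sum_ite_irrel, Finset.sum_const_zero,
    Finset.sum_ite_eq, Finset.mem_univ, ↓reduceIte, Finset.sum_ite_eq']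
  rw [Finset.sum_comm]
  simp only [mul_comm]

theorem ptrace2_kronecker_mul [DecidableEq β] (X : Matrix α α ℂ) (B : Matrix γ γ ℂ)
    (M : Matrix (α × β × γ) (α × β × γ) ℂ) :
    ptrace2 ((X ⊗ₖ ((1 : Matrix β β ℂ) ⊗ₖ B)) * M) = (X ⊗ₖ B) * ptrace2 M := by
  ext ⟨a, c⟩ ⟨a', c'⟩
  simp only [ptrace2, mul_apply, kroneckerMap_apply, one_apply, ite_mul, one_mul, zero_mul,
    mul_ite, mul_zero, Fintype.sum_prod_type, Finset.sum_ite_irrel, Finset.sum_const_zero,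
    Finset.sum_ite_eq, Finset.mem_univ, ↓reduceIte, Finset.mul_sum]
  rw [Finset.sum_comm]
  exact Finset.sum_congr rfl fun _ _ => Finset.sum_comm

theorem ptrace2_mul_kronecker [DecidableEq β] (X : Matrix α α ℂ) (B : Matrix γ γ ℂ)
    (M : Matrix (α × β × γ) (α × β × γ) ℂ) :
    ptrace2 (M * (X ⊗ₖ ((1 : Matrix β β ℂ) ⊗ₖ B))) = ptrace2 M * (X ⊗ₖ B) := by
  ext ⟨a, c⟩ ⟨a', c'⟩
  simp only [ptrace2, mul_apply, kroneckerMap_apply, one_apply, ite_mul, one_mul, zero_mul,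
    mul_ite, mul_zero, Fintype.sum_prod_type, Finset.sum_ite_irrel, Finset.sum_const_zero,
    Finset.sum_ite_eq', Finset.mem_univ, ↓reduceIte, Finset.sum_mul]
  rw [Finset.sum_comm]
  exact Finset.sum_congr rfl fun _ _ => Finset.sum_comm

theorem ptrace2_one_kronecker_mul_comm [DecidableEq α] [DecidableEq γ] (A : Matrix β β ℂ)
    (M : Matrix (α × β × γ) (α × β × γ) ℂ) :
    ptrace2 (((1 : Matrix α α ℂ) ⊗ₖ (A ⊗ₖ (1 : Matrix γ γ ℂ))) * M) =
      ptrace2 (M * ((1 : Matrix α α ℂ) ⊗ₖ (A ⊗ₖ (1 : Matrix γ γ ℂ)))) := by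
  ext ⟨a, c⟩ ⟨a', c'⟩
  simp only [ptrace2, mul_apply, kroneckerMap_apply, one_apply, mul_ite, mul_one, mul_zero,
    ite_mul, one_mul, zero_mul, Fintype.sum_prod_type, Finset.sum_ite_eq, Finset.mem_univ,
    ↓reduceIte, Finset.sum_ite_irrel, Finset.sum_const_zero, Finset.sum_ite_eq']
  rw [Finset.sum_comm]
  simp only [mul_comm]

theorem ptrace3_conj_kronecker [DecidableEq α] [DecidableEq β] [DecidableEq γ]
    (A : Matrix β β ℂ) {B : Matrix γ γ ℂ} (hB : Bᴴ * B = 1)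
    (M : Matrix (α × β × γ) (α × β × γ) ℂ) :
    ptrace3 (((1 : Matrix α α ℂ) ⊗ₖ (A ⊗ₖ B)) * M * ((1 : Matrix α α ℂ) ⊗ₖ (A ⊗ₖ B))ᴴ) =
      ((1 : Matrix α α ℂ) ⊗ₖ A) * ptrace3 M * ((1 : Matrix α α ℂ) ⊗ₖ A)ᴴ := by
  set P : Matrix (α × β × γ) (α × β × γ) ℂ := 1 ⊗ₖ (A ⊗ₖ 1)
  set Q : Matrix (α × β × γ) (α × β × γ) ℂ := 1 ⊗ₖ (1 ⊗ₖ B)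
  have hsplit : (1 : Matrix α α ℂ) ⊗ₖ (A ⊗ₖ B) = P * Q := by
    simp [P, Q, ← mul_kronecker_mul]
  have hQ : Qᴴ * Q = 1 := by
    simp [Q, conjTranspose_kronecker, ← mul_kronecker_mul, hB]
  have hP : Pᴴ = (1 : Matrix α α ℂ) ⊗ₖ (Aᴴ ⊗ₖ (1 : Matrix γ γ ℂ)) := by
    simp [P, conjTranspose_kronecker]
  rw [hsplit]
  calc ptrace3 (P * Q * M * (P * Q)ᴴ)
      = ptrace3 (P * (Q * (M * Qᴴ)) * Pᴴ) := by
        simp only [conjTranspose_mul, Matrix.mul_assoc]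
    _ = ((1 : Matrix α α ℂ) ⊗ₖ A) * ptrace3 (Q * (M * Qᴴ)) * ((1 : Matrix α α ℂ) ⊗ₖ A)ᴴ := by
        rw [hP, ptrace3_mul_kronecker, ptrace3_kronecker_mul,
          conjTranspose_kronecker (1 : Matrix α α ℂ) A,
          conjTranspose_one]
    _ = ((1 : Matrix α α ℂ) ⊗ₖ A) * ptrace3 M * ((1 : Matrix α α ℂ) ⊗ₖ A)ᴴ := by
        rw [ptrace3_one_kronecker_mul_comm, Matrix.mul_assoc M, hQ, Matrix.mul_one]

theorem ptrace2_conj_kronecker [DecidableEq α] [DecidableEq β] [DecidableEq γ]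
    {A : Matrix β β ℂ} (hA : Aᴴ * A = 1) (B : Matrix γ γ ℂ)
    (M : Matrix (α × β × γ) (α × β × γ) ℂ) :
    ptrace2 (((1 : Matrix α α ℂ) ⊗ₖ (A ⊗ₖ B)) * M * ((1 : Matrix α α ℂ) ⊗ₖ (A ⊗ₖ B))ᴴ) =
      ((1 : Matrix α α ℂ) ⊗ₖ B) * ptrace2 M * ((1 : Matrix α α ℂ) ⊗ₖ B)ᴴ := by
  set P : Matrix (α × β × γ) (α × β × γ) ℂ := 1 ⊗ₖ (1 ⊗ₖ B)
  set Q : Matrix (α × β × γ) (α × β × γ) ℂ := 1 ⊗ₖ (A ⊗ₖ 1)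
  have hsplit : (1 : Matrix α α ℂ) ⊗ₖ (A ⊗ₖ B) = P * Q := by
    simp [P, Q, ← mul_kronecker_mul]
  have hQ : Qᴴ * Q = 1 := by
    simp [Q, conjTranspose_kronecker, ← mul_kronecker_mul, hA]
  have hP : Pᴴ = (1 : Matrix α α ℂ) ⊗ₖ ((1 : Matrix β β ℂ) ⊗ₖ Bᴴ) := by
    simp [P, conjTranspose_kronecker]
  rw [hsplit]
  calc ptrace2 (P * Q * M * (P * Q)ᴴ)
      = ptrace2 (P * (Q * (M * Qᴴ)) * Pᴴ) := by
        simp only [conjTranspose_mul, Matrix.mul_assoc]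
    _ = ((1 : Matrix α α ℂ) ⊗ₖ B) * ptrace2 (Q * (M * Qᴴ)) * ((1 : Matrix α α ℂ) ⊗ₖ B)ᴴ := by
        rw [hP, ptrace2_mul_kronecker, ptrace2_kronecker_mul,
          conjTranspose_kronecker (1 : Matrix α α ℂ) B,
          conjTranspose_one]
    _ = ((1 : Matrix α α ℂ) ⊗ₖ B) * ptrace2 M * ((1 : Matrix α α ℂ) ⊗ₖ B)ᴴ := by
        rw [ptrace2_one_kronecker_mul_comm, Matrix.mul_assoc M, hQ, Matrix.mul_one]

end PartialTrace

theorem tmap_id_conj {α γ : Type*} [Fintype α] [DecidableEq α] [Fintype γ] [DecidableEq γ]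
    (A : Matrix γ γ ℂ) (M : Matrix (α × γ) (α × γ) ℂ) :
    tmap id (fun X => A * X * Aᴴ) M = ((1 : Matrix α α ℂ) ⊗ₖ A) * M * ((1 : Matrix α α ℂ) ⊗ₖ A)ᴴ := by
  ext ⟨a, c⟩ ⟨a', c'⟩
  simp only [tmap, id_eq, Matrix.mul_apply, Matrix.conjTranspose_apply, kroneckerMap_apply,
    one_apply, Matrix.single, Matrix.of_apply, Fintype.sum_prod_type,
    ite_mul, mul_ite, one_mul, mul_one, zero_mul, mul_zero,
    Finset.sum_ite_irrel, Finset.sum_const_zero, Finset.sum_ite_eq, Finset.sum_ite_eq',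
    Finset.mem_univ, if_true, Finset.sum_mul, ite_and]
  simp only [apply_ite (star : ℂ → ℂ), star_zero, mul_ite, mul_zero, Finset.sum_ite_irrel,
    Finset.sum_const_zero, Finset.sum_ite_eq, Finset.mem_univ, if_true]
  rw [Finset.sum_comm]
  exact Finset.sum_congr rfl fun _ _ => Finset.sum_congr rfl fun _ _ => by ring

theorem IsDensity.conj_unitary {ι : Type*} [Fintype ι] [DecidableEq ι] {M W : Matrix ι ι ℂ}
    (hM : IsDensity M) (hW : W ∈ unitaryGroup ι ℂ) : IsDensity (W * M * Wᴴ) :=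
  ⟨hM.1.mul_mul_conjTranspose_same W, by
    rw [trace_mul_cycle, ← star_eq_conjTranspose, Unitary.star_mul_self_of_mem hW, Matrix.one_mul,
      hM.2]⟩

theorem one_kronecker_star_conj_cancel {α β : Type*} [Fintype α] [DecidableEq α] [Fintype β]
    [DecidableEq β] {U : Matrix β β ℂ} (hU : U ∈ unitaryGroup β ℂ) (X : Matrix (α × β) (α × β) ℂ) :
    ((1 : Matrix α α ℂ) ⊗ₖ star U) * (((1 : Matrix α α ℂ) ⊗ₖ U) * X * ((1 : Matrix α α ℂ) ⊗ₖ U)ᴴ) *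
      ((1 : Matrix α α ℂ) ⊗ₖ star U)ᴴ = X := by
  set K : Matrix (α × β) (α × β) ℂ := (1 : Matrix α α ℂ) ⊗ₖ U
  have hK : star K * K = 1 :=
    Unitary.star_mul_self_of_mem (kronecker_mem_unitary (one_mem _) hU)
  have hstar : (1 : Matrix α α ℂ) ⊗ₖ star U = star K := by
    simp only [K, star_eq_conjTranspose, conjTranspose_kronecker, conjTranspose_one]
  rw [hstar, ← star_eq_conjTranspose, ← star_eq_conjTranspose, star_star]
  calc star K * (K * X * star K) * K = (star K * K) * X * (star K * K) := by
        simp only [Matrix.mul_assoc]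
    _ = X := by rw [hK, Matrix.one_mul, Matrix.mul_one]

/-- Steerability of `ρ` by channels `Φ₁, Φ₂` is `HasCommonExtension ((id ⊗ Φ₁) ρ) ((id ⊗ Φ₂) ρ)`. -/
def HasCommonExtension {α β γ : Type*} [Fintype α] [Fintype β] [Fintype γ]
    (ρ₁ : Matrix (α × β) (α × β) ℂ) (ρ₂ : Matrix (α × γ) (α × γ) ℂ) : Prop :=
  ∃ σ : Matrix (α × β × γ) (α × β × γ) ℂ, IsDensity σ ∧ ptrace3 σ = ρ₁ ∧ ptrace2 σ = ρ₂

section CommonExtension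

variable {α β γ : Type*} [Fintype α] [DecidableEq α] [Fintype β] [DecidableEq β]
  [Fintype γ] [DecidableEq γ] {U : Matrix β β ℂ} {V : Matrix γ γ ℂ}
  {ρ₁ : Matrix (α × β) (α × β) ℂ} {ρ₂ : Matrix (α × γ) (α × γ) ℂ}

theorem HasCommonExtension.conj_unitary (h : HasCommonExtension ρ₁ ρ₂)
    (hU : U ∈ unitaryGroup β ℂ) (hV : V ∈ unitaryGroup γ ℂ) :
    HasCommonExtension (((1 : Matrix α α ℂ) ⊗ₖ U) * ρ₁ * ((1 : Matrix α α ℂ) ⊗ₖ U)ᴴ)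
      (((1 : Matrix α α ℂ) ⊗ₖ V) * ρ₂ * ((1 : Matrix α α ℂ) ⊗ₖ V)ᴴ) := by
  obtain ⟨σ, hσ, h₁, h₂⟩ := h
  have hW : (1 : Matrix α α ℂ) ⊗ₖ (U ⊗ₖ V) ∈ unitaryGroup (α × β × γ) ℂ :=
    kronecker_mem_unitary (one_mem _) (kronecker_mem_unitary hU hV)
  refine ⟨_, hσ.conj_unitary hW, ?_, ?_⟩
  · rw [ptrace3_conj_kronecker U (Unitary.star_mul_self_of_mem hV), h₁]
  · rw [ptrace2_conj_kronecker (Unitary.star_mul_self_of_mem hU) V, h₂]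

theorem hasCommonExtension_conj_unitary_iff (hU : U ∈ unitaryGroup β ℂ)
    (hV : V ∈ unitaryGroup γ ℂ) :
    HasCommonExtension (((1 : Matrix α α ℂ) ⊗ₖ U) * ρ₁ * ((1 : Matrix α α ℂ) ⊗ₖ U)ᴴ)
      (((1 : Matrix α α ℂ) ⊗ₖ V) * ρ₂ * ((1 : Matrix α α ℂ) ⊗ₖ V)ᴴ) ↔
      HasCommonExtension ρ₁ ρ₂ := by
  refine ⟨fun h => ?_, fun h => h.conj_unitary hU hV⟩
  simpa only [one_kronecker_star_conj_cancel hU, one_kronecker_star_conj_cancel hV] using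
    h.conj_unitary (Unitary.star_mem hU) (Unitary.star_mem hV)

end CommonExtension

theorem steerable_unitary_iff_id_general {n : ℕ}
    (ρ : Matrix (Fin n × Fin n) (Fin n × Fin n) ℂ)
    (U V : Matrix (Fin n) (Fin n) ℂ)
    (hU : U ∈ Matrix.unitaryGroup (Fin n) ℂ) (hV : V ∈ Matrix.unitaryGroup (Fin n) ℂ) :
    (∃ σ : Matrix (Fin n × Fin n × Fin n) (Fin n × Fin n × Fin n) ℂ,
        IsDensity σ ∧
        ptrace3 σ = tmap id (fun X => U * X * Uᴴ) ρ ∧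
        ptrace2 σ = tmap id (fun X => V * X * Vᴴ) ρ) ↔
      (∃ σ' : Matrix (Fin n × Fin n × Fin n) (Fin n × Fin n × Fin n) ℂ,
        IsDensity σ' ∧ ptrace3 σ' = ρ ∧ ptrace2 σ' = ρ) := by
  rw [tmap_id_conj, tmap_id_conj]
  exact hasCommonExtension_conj_unitary_iff hU hV

/-- a bipartite state is steerable by two unitary channels iff it is
steerable by two copies of the identity channel. -/
theorem steerable_unitary_iff_id {n : ℕ} (hn : 1 ≤ n)
    (ρ : Matrix (Fin n × Fin n) (Fin n × Fin n) ℂ) (hρ : IsDensity ρ)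
    (U V : Matrix (Fin n) (Fin n) ℂ)
    (hU : U ∈ Matrix.unitaryGroup (Fin n) ℂ) (hV : V ∈ Matrix.unitaryGroup (Fin n) ℂ) :
    (∃ σ : Matrix (Fin n × Fin n × Fin n) (Fin n × Fin n × Fin n) ℂ,
        IsDensity σ ∧
        ptrace3 σ = tmap id (fun X => U * X * Uᴴ) ρ ∧
        ptrace2 σ = tmap id (fun X => V * X * Vᴴ) ρ) ↔
      (∃ σ' : Matrix (Fin n × Fin n × Fin n) (Fin n × Fin n × Fin n) ℂ,
        IsDensity σ' ∧ ptrace3 σ' = ρ ∧ ptrace2 σ' = ρ) :=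
  steerable_unitary_iff_id_general ρ U V hU hV

end
end

section
/- Let n ≥ 1 and let ρ be a density matrix indexed by Fin n × Fin n. If there exists a density matrix σ indexed by Fin n × Fin n × Fin n with Tr₃ σ = ρ and Tr₂ σ = ρ, then for every pair of quantum channels Φ₁, Φ₂ : Matrix (Fin n) (Fin n) ℂ → Matrix (Fin n) (Fin n) ℂ there exists a density matrix σ̃ indexed by Fin n × Fin n × Fin n with Tr₃ σ̃ = (id ⊗ Φ₁)(ρ) and Tr₂ σ̃ = (id ⊗ Φ₂)(ρ). (Thus a state steerable by some pair of channels is steerable by two copies of the identity channel.) -/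
open Matrix BigOperators
open scoped ComplexOrder

noncomputable section

/-!
Apply `id ⊗ Φ₁ ⊗ Φ₂` to the extension `σ`. The result is again a state: the tensor product of
maps with positive semidefinite Choi matrices has a positive semidefinite Choi matrix (up to
reindexing it is the Kronecker product of the two), such a map sends positive semidefinite
matrices to positive semidefinite ones, and tensor products of trace-preserving maps preserve
trace. Since `Φ₂` preserves trace, tracing out the third factor leaves
`(id ⊗ Φ₁)(Tr₃ σ) = (id ⊗ Φ₁) ρ`, and symmetrically for the second factor.
-/

open scoped Kronecker

theorem LinearMap.matrix_apply_eq_sum {α β : Type*} [Fintype α] [DecidableEq α]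
    (Φ : Matrix α α ℂ →ₗ[ℂ] Matrix β β ℂ) (M : Matrix α α ℂ) (b b' : β) :
    Φ M b b' = ∑ a, ∑ a', M a a' * Φ (Matrix.single a a' 1) b b' := by
  have hexp : M = ∑ a, ∑ a', M a a' • Matrix.single a a' 1 := by
    simpa using matrix_eq_sum_single M
  conv_lhs => rw [hexp]
  simp only [map_sum, map_smul, Matrix.sum_apply, Matrix.smul_apply, smul_eq_mul]

theorem sum_diag_map_single_of_trace_eq {γ δ : Type*} [Fintype γ] [DecidableEq γ] [Fintype δ]
    {Ψ : Matrix γ γ ℂ → Matrix δ δ ℂ} (hΨ : ∀ X, (Ψ X).trace = X.trace) (c c' : γ) :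
    ∑ d, Ψ (single c c' 1) d d = if c = c' then 1 else 0 := by
  change (Ψ _).trace = _
  rw [hΨ]
  split_ifs with h
  · rw [h, trace_single_eq_same]
  · exact trace_single_eq_of_ne c c' 1 h

theorem trace_ptr1 {α β : Type*} [Fintype α] [Fintype β] (M : Matrix (α × β) (α × β) ℂ) :
    (ptr1 M).trace = M.trace := by
  simp only [ptr1, trace, diag, Fintype.sum_prod_type]
  exact Finset.sum_comm

section TensorMap

variable {α β γ δ : Type*} [Fintype α] [DecidableEq α] [Fintype γ] [DecidableEq γ]

theorem tmap_single (Φ : Matrix α α ℂ → Matrix β β ℂ) (Ψ : Matrix γ γ ℂ → Matrix δ δ ℂ)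
    (a a' : α) (c c' : γ) :
    tmap Φ Ψ (single (a, c) (a', c') 1) = Φ (single a a' 1) ⊗ₖ Ψ (single c c' 1) := by
  ext p q
  simp [tmap, single_apply, ite_and, Finset.sum_ite_eq]

def tmapₗ (Φ : Matrix α α ℂ →ₗ[ℂ] Matrix β β ℂ) (Ψ : Matrix γ γ ℂ →ₗ[ℂ] Matrix δ δ ℂ) :
    Matrix (α × γ) (α × γ) ℂ →ₗ[ℂ] Matrix (β × δ) (β × δ) ℂ where
  toFun := tmap Φ Ψ
  map_add' M N := by
    ext p q
    simp only [tmap, Matrix.add_apply, add_mul, Finset.sum_add_distrib]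
  map_smul' r M := by
    ext p q
    simp only [tmap, Matrix.smul_apply, smul_eq_mul, RingHom.id_apply, Finset.mul_sum,
      mul_assoc]

@[simp]
theorem coe_tmapₗ (Φ : Matrix α α ℂ →ₗ[ℂ] Matrix β β ℂ) (Ψ : Matrix γ γ ℂ →ₗ[ℂ] Matrix δ δ ℂ) :
    ⇑(tmapₗ Φ Ψ) = tmap Φ Ψ :=
  rfl

theorem choi_tmapₗ (Φ : Matrix α α ℂ →ₗ[ℂ] Matrix β β ℂ) (Ψ : Matrix γ γ ℂ →ₗ[ℂ] Matrix δ δ ℂ) :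
    choi (tmapₗ Φ Ψ) = (choi Φ ⊗ₖ choi Ψ).submatrix
      (fun p => ((p.1.1, p.2.1), (p.1.2, p.2.2))) (fun p => ((p.1.1, p.2.1), (p.1.2, p.2.2))) := by
  ext ⟨⟨b, d⟩, a, c⟩ ⟨⟨b', d'⟩, a', c'⟩
  simp [choi, tmap_single]

theorem posSemidef_choi_tmapₗ [Fintype β] [Fintype δ] {Φ : Matrix α α ℂ →ₗ[ℂ] Matrix β β ℂ}
    {Ψ : Matrix γ γ ℂ →ₗ[ℂ] Matrix δ δ ℂ} (hΦ : (choi Φ).PosSemidef) (hΨ : (choi Ψ).PosSemidef) :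
    (choi (tmapₗ Φ Ψ)).PosSemidef := by
  rw [choi_tmapₗ]
  exact (hΦ.kronecker hΨ).submatrix _

theorem ptr2_tmap [Fintype δ] (Φ : Matrix α α ℂ →ₗ[ℂ] Matrix β β ℂ)
    {Ψ : Matrix γ γ ℂ → Matrix δ δ ℂ} (hΨ : ∀ X, (Ψ X).trace = X.trace)
    (M : Matrix (α × γ) (α × γ) ℂ) :
    ptr2 (tmap Φ Ψ M) = Φ (ptr2 M) := by
  ext b b'
  rw [ptr2, Φ.matrix_apply_eq_sum]
  simp only [ptr2, tmap, Finset.sum_mul]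
  simp only [Finset.sum_comm (γ := δ), ← Finset.mul_sum, sum_diag_map_single_of_trace_eq hΨ]
  simp

theorem ptr1_tmap [Fintype β] {Φ : Matrix α α ℂ → Matrix β β ℂ}
    (Ψ : Matrix γ γ ℂ →ₗ[ℂ] Matrix δ δ ℂ) (hΦ : ∀ X, (Φ X).trace = X.trace)
    (M : Matrix (α × γ) (α × γ) ℂ) :
    ptr1 (tmap Φ Ψ M) = Ψ (ptr1 M) := by
  ext d d'
  rw [ptr1, Ψ.matrix_apply_eq_sum]
  simp only [ptr1, tmap, Finset.sum_mul]
  simp only [Finset.sum_comm (γ := β)]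
  simp only [mul_left_comm _ (Φ _ _ _), ← Finset.sum_mul, sum_diag_map_single_of_trace_eq hΦ]
  simp only [ite_mul, one_mul, zero_mul, Finset.sum_ite_irrel, Finset.sum_const_zero,
    Finset.sum_ite_eq, Finset.mem_univ, ↓reduceIte, Finset.sum_mul]
  exact Finset.sum_comm.trans (Finset.sum_congr rfl fun _ _ => Finset.sum_comm)

theorem trace_tmap [Fintype β] [Fintype δ] {Φ : Matrix α α ℂ → Matrix β β ℂ}
    (Ψ : Matrix γ γ ℂ →ₗ[ℂ] Matrix δ δ ℂ) (hΦ : ∀ X, (Φ X).trace = X.trace)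
    (hΨ : ∀ X, (Ψ X).trace = X.trace) (M : Matrix (α × γ) (α × γ) ℂ) :
    (tmap Φ Ψ M).trace = M.trace := by
  rw [← trace_ptr1, ptr1_tmap Ψ hΦ, hΨ, trace_ptr1]

theorem tmap_id_submatrix (Ψ : Matrix γ γ ℂ →ₗ[ℂ] Matrix δ δ ℂ) (M : Matrix (α × γ) (α × γ) ℂ)
    (x x' : α) :
    (tmap id Ψ M).submatrix (Prod.mk x) (Prod.mk x') =
      Ψ (M.submatrix (Prod.mk x) (Prod.mk x')) := by
  ext d d'
  rw [Ψ.matrix_apply_eq_sum]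
  simp [tmap, single_apply, ite_and, Finset.sum_ite_eq']

end TensorMap

theorem posSemidef_choi_id {α : Type*} [Fintype α] [DecidableEq α] :
    (choi (LinearMap.id : Matrix α α ℂ →ₗ[ℂ] Matrix α α ℂ)).PosSemidef := by
  convert posSemidef_vecMulVec_self_star (fun p : α × α => if p.1 = p.2 then (1 : ℂ) else 0)
  ext p q
  by_cases hp : p.1 = p.2 <;> simp [choi, single_apply, vecMulVec_apply, hp, eq_comm]

theorem posSemidef_map_of_posSemidef_choi {α β : Type*} [Fintype α] [DecidableEq α] [Fintype β]
    {Φ : Matrix α α ℂ →ₗ[ℂ] Matrix β β ℂ} (hΦ : (choi Φ).PosSemidef) {M : Matrix α α ℂ}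
    (hM : M.PosSemidef) : (Φ M).PosSemidef := by
  classical
  let V : Matrix (β × α) β ℂ := of fun r b => if r.1 = b then 1 else 0
  have hΦM : Φ M = Vᴴ * (M.submatrix Prod.snd Prod.snd ⊙ choi Φ) * V := by
    ext b b'
    rw [Φ.matrix_apply_eq_sum]
    simp only [V, choi, mul_apply, conjTranspose_apply, of_apply, RCLike.star_def,
      MonoidWithZeroHom.map_ite_one_zero, hadamard_apply, submatrix_apply, ite_mul, one_mul,
      zero_mul, mul_ite, mul_one, mul_zero, Fintype.sum_prod_type, Finset.sum_ite_irrel,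
      Finset.sum_const_zero, Finset.sum_ite_eq', Finset.mem_univ, ↓reduceIte]
    exact Finset.sum_comm
  rw [hΦM]
  exact ((hM.submatrix Prod.snd).hadamard hΦ).conjTranspose_mul_mul_same V

section Tripartite

variable {α β γ δ ε : Type*} [Fintype α] [DecidableEq α] [Fintype β] [DecidableEq β]
  [Fintype γ] [DecidableEq γ]

theorem ptrace3_tmap_id_tmap [Fintype ε] (Φ : Matrix β β ℂ →ₗ[ℂ] Matrix δ δ ℂ)
    {Ψ : Matrix γ γ ℂ →ₗ[ℂ] Matrix ε ε ℂ} (hΨ : ∀ X, (Ψ X).trace = X.trace)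
    (M : Matrix (α × β × γ) (α × β × γ) ℂ) :
    ptrace3 (tmap id (tmap Φ Ψ) M) = tmap id Φ (ptrace3 M) := by
  ext ⟨x, y⟩ ⟨x', y'⟩
  change ptr2 ((tmap id (tmapₗ Φ Ψ) M).submatrix (Prod.mk x) (Prod.mk x')) y y' =
    (tmap id Φ (ptrace3 M)).submatrix (Prod.mk x) (Prod.mk x') y y'
  rw [tmap_id_submatrix, tmap_id_submatrix, coe_tmapₗ, ptr2_tmap Φ hΨ]
  rfl

theorem ptrace2_tmap_id_tmap [Fintype δ] {Φ : Matrix β β ℂ →ₗ[ℂ] Matrix δ δ ℂ}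
    (Ψ : Matrix γ γ ℂ →ₗ[ℂ] Matrix ε ε ℂ) (hΦ : ∀ X, (Φ X).trace = X.trace)
    (M : Matrix (α × β × γ) (α × β × γ) ℂ) :
    ptrace2 (tmap id (tmap Φ Ψ) M) = tmap id Ψ (ptrace2 M) := by
  ext ⟨x, z⟩ ⟨x', z'⟩
  change ptr1 ((tmap id (tmapₗ Φ Ψ) M).submatrix (Prod.mk x) (Prod.mk x')) z z' =
    (tmap id Ψ (ptrace2 M)).submatrix (Prod.mk x) (Prod.mk x') z z'
  rw [tmap_id_submatrix, tmap_id_submatrix, coe_tmapₗ, ptr1_tmap Ψ hΦ]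
  rfl

end Tripartite

theorem not_steerable_of_id_general {n : ℕ}
    (ρ : Matrix (Fin n × Fin n) (Fin n × Fin n) ℂ)
    (σ : Matrix (Fin n × Fin n × Fin n) (Fin n × Fin n × Fin n) ℂ)
    (hσ : IsDensity σ) (h3 : ptrace3 σ = ρ) (h2 : ptrace2 σ = ρ)
    (Φ₁ Φ₂ : Matrix (Fin n) (Fin n) ℂ →ₗ[ℂ] Matrix (Fin n) (Fin n) ℂ)
    (hΦ₁ : IsQChannel Φ₁) (hΦ₂ : IsQChannel Φ₂) :
    ∃ σ' : Matrix (Fin n × Fin n × Fin n) (Fin n × Fin n × Fin n) ℂ,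
      IsDensity σ' ∧
      ptrace3 σ' = tmap id (⇑Φ₁) ρ ∧
      ptrace2 σ' = tmap id (⇑Φ₂) ρ := by
  refine ⟨tmap id (tmap Φ₁ Φ₂) σ, ⟨?_, ?_⟩, ?_, ?_⟩
  · exact posSemidef_map_of_posSemidef_choi
      (posSemidef_choi_tmapₗ posSemidef_choi_id (posSemidef_choi_tmapₗ hΦ₁.2 hΦ₂.2)) hσ.1
  · exact (trace_tmap (Φ := id) (tmapₗ Φ₁ Φ₂) (fun _ => rfl) (trace_tmap Φ₂ hΦ₁.1 hΦ₂.1) σ).trans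
      hσ.2
  · rw [ptrace3_tmap_id_tmap Φ₁ hΦ₂.1, h3]
  · rw [ptrace2_tmap_id_tmap Φ₂ hΦ₁.1, h2]

/-- if a bipartite state is not steerable by two copies of the identity
channel, then it is not steerable by any pair of quantum channels. -/
theorem not_steerable_of_id {n : ℕ} (hn : 1 ≤ n)
    (ρ : Matrix (Fin n × Fin n) (Fin n × Fin n) ℂ) (hρ : IsDensity ρ)
    (σ : Matrix (Fin n × Fin n × Fin n) (Fin n × Fin n × Fin n) ℂ)
    (hσ : IsDensity σ) (h3 : ptrace3 σ = ρ) (h2 : ptrace2 σ = ρ)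
    (Φ₁ Φ₂ : Matrix (Fin n) (Fin n) ℂ →ₗ[ℂ] Matrix (Fin n) (Fin n) ℂ)
    (hΦ₁ : IsQChannel Φ₁) (hΦ₂ : IsQChannel Φ₂) :
    ∃ σ' : Matrix (Fin n × Fin n × Fin n) (Fin n × Fin n × Fin n) ℂ,
      IsDensity σ' ∧
      ptrace3 σ' = tmap id (⇑Φ₁) ρ ∧
      ptrace2 σ' = tmap id (⇑Φ₂) ρ :=
  not_steerable_of_id_general ρ σ hσ h3 h2 Φ₁ Φ₂ hΦ₁ hΦ₂
end
end

section
/- Let |W⟩ = (|001⟩ + |010⟩ + |100⟩)/√3 ∈ ℂ² ⊗ ℂ² ⊗ ℂ² and ρ_W = Tr₃(|W⟩⟨W|). If σ is a density matrix indexed by Fin 2 × Fin 2 × Fin 2 such that Tr₂ σ = ρ_W and Tr₃ σ = ρ_W, then σ = |W⟩⟨W|; that is, |W⟩⟨W| is the unique tripartite state both of whose two bipartite marginals obtained by tracing out the second, respectively the third, qubit equal ρ_W. -/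
/-!
Write `σ = gram ℂ v` for vectors `v p`, `p ∈ {0,1}³`. The marginal constraints are linear in
the Gram entries. The vanishing entries of `ρ_W` force `v 110 = v 111 = v 101 = 0`, hence
`‖v 100‖² = 1/3`. The coherences `⟪v 010, v 100⟫ = ⟪v 001, v 100⟫ = 1/3` together with
`‖v 010‖² + ‖v 011‖² = ‖v 001‖² + ‖v 000‖² = 1/3` are the equality case of Cauchy–Schwarz:
they say `‖v 010 - v 100‖² + ‖v 011‖² = 0`, and likewise for `v 001`, `v 000`. So every `v p`
is `√3 · W_p` times the single vector `v 100`, and `σ = |W⟩⟨W|`.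
-/

open Matrix BigOperators
open scoped ComplexOrder

noncomputable section

/-- The W vector `(|001⟩ + |010⟩ + |100⟩)/√3`. -/
def wVec : Fin 2 × Fin 2 × Fin 2 → ℂ :=
  fun t => if t = (0, 0, 1) ∨ t = (0, 1, 0) ∨ t = (1, 0, 0)
    then (((Real.sqrt 3)⁻¹ : ℝ) : ℂ) else 0

/-- The projector `|W⟩⟨W|` onto the W state. -/
def wProj : Matrix (Fin 2 × Fin 2 × Fin 2) (Fin 2 × Fin 2 × Fin 2) ℂ :=
  fun p q => wVec p * (starRingEnd ℂ) (wVec q)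

/-- `ρ_W`, the two-qubit marginal of the W state. -/
def rhoW : Matrix (Fin 2 × Fin 2) (Fin 2 × Fin 2) ℂ := ptrace3 wProj

open scoped InnerProductSpace

theorem Matrix.PosSemidef.exists_eq_gram {𝕜 n : Type*} [RCLike 𝕜] [Fintype n] [DecidableEq n]
    {A : Matrix n n 𝕜} (hA : A.PosSemidef) :
    ∃ v : n → EuclideanSpace 𝕜 n, A = gram 𝕜 v := by
  open scoped MatrixOrder in
  obtain ⟨B, rfl⟩ := CStarAlgebra.nonneg_iff_eq_star_mul_self.mp hA.nonneg
  refine ⟨fun i => WithLp.toLp 2 (fun k => B k i), ?_⟩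
  ext i j
  simp [Matrix.mul_apply, PiLp.inner_apply, mul_comm]

section InnerProduct

variable {𝕜 E : Type*} [RCLike 𝕜] [NormedAddCommGroup E] [InnerProductSpace 𝕜 E]

theorem eq_and_eq_zero_of_inner_add_inner_eq {u v w : E}
    (hnorm : ⟪u, u⟫_𝕜 + ⟪w, w⟫_𝕜 = ⟪v, v⟫_𝕜) (hinner : ⟪u, v⟫_𝕜 = ⟪v, v⟫_𝕜) :
    u = v ∧ w = 0 := by
  have hsum : ‖u - v‖ ^ 2 + ‖w‖ ^ 2 = 0 := by
    have hnorm_re := congrArg RCLike.re hnorm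
    have hinner_re := congrArg RCLike.re hinner
    simp only [map_add, inner_self_eq_norm_sq] at hnorm_re hinner_re
    rw [@norm_sub_sq 𝕜]
    linarith
  obtain ⟨huv, hw⟩ := (add_eq_zero_iff_of_nonneg (sq_nonneg _) (sq_nonneg _)).mp hsum
  simpa [sub_eq_zero] using And.intro huv hw

theorem eq_zero_and_eq_zero_of_inner_add_inner_eq_zero {u w : E}
    (h : ⟪u, u⟫_𝕜 + ⟪w, w⟫_𝕜 = 0) : u = 0 ∧ w = 0 :=
  eq_and_eq_zero_of_inner_add_inner_eq (𝕜 := 𝕜) (v := 0) (by rwa [inner_zero_left]) (by simp)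

end InnerProduct

theorem ptrace2_apply_fin_two {α γ : Type*} (M : Matrix (α × Fin 2 × γ) (α × Fin 2 × γ) ℂ)
    (p q : α × γ) : ptrace2 M p q = M (p.1, 0, p.2) (q.1, 0, q.2) + M (p.1, 1, p.2) (q.1, 1, q.2) :=
  Fin.sum_univ_two _

theorem ptrace3_apply_fin_two {α β : Type*} (M : Matrix (α × β × Fin 2) (α × β × Fin 2) ℂ)
    (p q : α × β) : ptrace3 M p q = M (p.1, p.2, 0) (q.1, q.2, 0) + M (p.1, p.2, 1) (q.1, q.2, 1) :=
  Fin.sum_univ_two _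

theorem conj_wVec (p : Fin 2 × Fin 2 × Fin 2) : starRingEnd ℂ (wVec p) = wVec p := by
  unfold wVec
  split_ifs <;> simp

theorem wProj_apply (p q : Fin 2 × Fin 2 × Fin 2) :
    wProj p q = if (p = (0, 0, 1) ∨ p = (0, 1, 0) ∨ p = (1, 0, 0)) ∧
      (q = (0, 0, 1) ∨ q = (0, 1, 0) ∨ q = (1, 0, 0)) then 3⁻¹ else 0 := by
  unfold wProj wVec
  split_ifs <;> simp_all [← Complex.ofReal_mul, ← mul_inv]

theorem rhoW_entries :
    rhoW (1, 1) (1, 1) = 0 ∧ rhoW (1, 0) (1, 0) = 3⁻¹ ∧ rhoW (0, 1) (0, 1) = 3⁻¹ ∧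
      rhoW (0, 0) (0, 0) = 3⁻¹ ∧ rhoW (0, 1) (1, 0) = 3⁻¹ := by
  simp [rhoW, ptrace3_apply_fin_two, wProj_apply]

section GramVectors

variable {E : Type*} [NormedAddCommGroup E] [InnerProductSpace ℂ E]

theorem gram_sqrt_three_mul_wVec_smul {u : E} (hu : ⟪u, u⟫_ℂ = 3⁻¹) :
    gram ℂ (fun p => ((√3 : ℝ) * wVec p : ℂ) • u) = wProj := by
  have hsqrt : ((√3 : ℝ) : ℂ) * (√3 : ℝ) = 3 := by
    rw [← Complex.ofReal_mul, Real.mul_self_sqrt (by norm_num)]; norm_num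
  ext p q
  simp only [gram_apply, inner_smul_left, inner_smul_right, hu, wProj, map_mul,
    Complex.conj_ofReal, conj_wVec]
  linear_combination (wVec p * wVec q / 3) * hsqrt

theorem eq_sqrt_three_mul_wVec_smul_of_ptrace_gram {v : Fin 2 × Fin 2 × Fin 2 → E}
    (h2 : ptrace2 (gram ℂ v) = rhoW) (h3 : ptrace3 (gram ℂ v) = rhoW) :
    ⟪v (1, 0, 0), v (1, 0, 0)⟫_ℂ = 3⁻¹ ∧ v = fun p => ((√3 : ℝ) * wVec p : ℂ) • v (1, 0, 0) := by
  obtain ⟨r11, r10, r01, r00, r0110⟩ := rhoW_entries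
  have marg2 (a c a' c' : Fin 2) :
      ⟪v (a, 0, c), v (a', 0, c')⟫_ℂ + ⟪v (a, 1, c), v (a', 1, c')⟫_ℂ = rhoW (a, c) (a', c') := by
    rw [← h2, ptrace2_apply_fin_two]; rfl
  have marg3 (a b a' b' : Fin 2) :
      ⟪v (a, b, 0), v (a', b', 0)⟫_ℂ + ⟪v (a, b, 1), v (a', b', 1)⟫_ℂ = rhoW (a, b) (a', b') := by
    rw [← h3, ptrace3_apply_fin_two]; rfl
  obtain ⟨hv110, hv111⟩ := eq_zero_and_eq_zero_of_inner_add_inner_eq_zero (r11 ▸ marg3 1 1 1 1)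
  obtain ⟨hv101, -⟩ := eq_zero_and_eq_zero_of_inner_add_inner_eq_zero (r11 ▸ marg2 1 1 1 1)
  have hu : ⟪v (1, 0, 0), v (1, 0, 0)⟫_ℂ = 3⁻¹ := by
    simpa only [hv110, inner_zero_left, add_zero, r10] using marg2 1 0 1 0
  obtain ⟨hv010, hv011⟩ := eq_and_eq_zero_of_inner_add_inner_eq (𝕜 := ℂ)
    (u := v (0, 1, 0)) (v := v (1, 0, 0)) (w := v (0, 1, 1))
    (hu ▸ r01 ▸ marg3 0 1 0 1)
    (by simpa only [hu, hv101, inner_zero_right, add_zero, r0110] using marg3 0 1 1 0)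
  obtain ⟨hv001, hv000⟩ := eq_and_eq_zero_of_inner_add_inner_eq (𝕜 := ℂ)
    (u := v (0, 0, 1)) (v := v (1, 0, 0)) (w := v (0, 0, 0))
    (by rw [add_comm, hu, ← r00]; exact marg3 0 0 0 0)
    (by simpa only [hu, hv110, inner_zero_right, add_zero, r0110] using marg2 0 1 1 0)
  refine ⟨hu, funext fun ⟨a, b, c⟩ => ?_⟩
  fin_cases a <;> fin_cases b <;> fin_cases c <;> simp [wVec, *]

end GramVectors

/-- `|W⟩⟨W|` is the unique tripartite density matrix whose marginals
obtained by tracing out the second, respectively third, qubit both equal `ρ_W`. -/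
theorem wProj_unique
    (σ : Matrix (Fin 2 × Fin 2 × Fin 2) (Fin 2 × Fin 2 × Fin 2) ℂ)
    (hσ : IsDensity σ) (h2 : ptrace2 σ = rhoW) (h3 : ptrace3 σ = rhoW) :
    σ = wProj := by
  obtain ⟨v, rfl⟩ := hσ.1.exists_eq_gram
  obtain ⟨hu, hv⟩ := eq_sqrt_three_mul_wVec_smul_of_ptrace_gram h2 h3
  rw [hv]
  exact gram_sqrt_three_mul_wVec_smul hu

end
end
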